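/- arXiv:1805.01422 — 4 statements merged into one kernel-verified Lean document; each statement's English description precedes it below -/
import Mathlib

section
/- Let M0 and M1 be sets of probability measures on a measurable space (Ω, 𝒜) such that M0 ∪ M1 is dominated by a σ-finite measure. Then inf over all measurable tests φ : Ω → [0,1] of sup_{μ0 ∈ M0, μ1 ∈ M1} ( ∫ φ dμ0 + ∫ (1−φ) dμ1 ) equals sup_{ν0 ∈ conv(M0), ν1 ∈ conv(M1)} inf over all measurable tests φ : Ω → [0,1] of ( ∫ φ dν0 + ∫ (1−φ) dν1 ), i.e. it equals π(conv(M0), conv(M1)). -/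
open MeasureTheory ProbabilityTheory ENNReal

namespace PrivacyPaper

variable {X Z Ω : Type*} [MeasurableSpace X] [MeasurableSpace Z] [MeasurableSpace Ω]

/-- Total variation distance between two measures:
`d_TV(P0, P1) = sup_{A measurable} |P0(A) - P1(A)|`. -/
noncomputable def dTV (P0 P1 : Measure Ω) : ℝ :=
  ⨆ A : {A : Set Ω // MeasurableSet A}, |(P0 A.1).toReal - (P1 A.1).toReal|

/-- Hellinger distance between two measures, computed via densities with respect to the
dominating measure `P0 + P1`. -/
noncomputable def dH (P0 P1 : Measure Ω) : ℝ :=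
  Real.sqrt (∫ ω, (Real.sqrt ((P0.rnDeriv (P0 + P1) ω).toReal) -
    Real.sqrt ((P1.rnDeriv (P0 + P1) ω).toReal)) ^ 2 ∂(P0 + P1))

/-- Hellinger affinity `ρ(P0, P1) = ∫ √(p0 p1) dμ`, with `μ = P0 + P1`. -/
noncomputable def hellingerAffinity (P0 P1 : Measure Ω) : ℝ :=
  ∫ ω, Real.sqrt ((P0.rnDeriv (P0 + P1) ω).toReal * (P1.rnDeriv (P0 + P1) ω).toReal)
    ∂(P0 + P1)

/-- Modulus of continuity of a functional `θ` over `P` with respect to a distance `d`,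
with values in `ℝ≥0∞`. -/
noncomputable def modulus (d : Measure X → Measure X → ℝ) (P : Set (Measure X))
    (θ : Measure X → ℝ) (ε : ℝ) : ℝ≥0∞ :=
  ⨆ (P0 : Measure X) (_ : P0 ∈ P) (P1 : Measure X) (_ : P1 ∈ P) (_ : d P0 P1 ≤ ε),
    ENNReal.ofReal |θ P0 - θ P1|

/-- Total variation modulus of continuity `ω_TV`. -/
noncomputable def omegaTV (P : Set (Measure X)) (θ : Measure X → ℝ) : ℝ → ℝ≥0∞ :=
  modulus dTV P θ

/-- Hellinger modulus of continuity `ω_H`. -/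
noncomputable def omegaH (P : Set (Measure X)) (θ : Measure X → ℝ) : ℝ → ℝ≥0∞ :=
  modulus dH P θ

/-- Push-forward of a measure through a channel `c` (given as a map into measures):
`(c P)(A) = ∫ c(A|x) dP(x)`. -/
noncomputable def push (c : X → Measure Z) (μ : Measure X) : Measure Z := μ.bind c

/-- Privatized Hellinger modulus `ω_H^{(Q1)}`. -/
noncomputable def omegaHQ (c : X → Measure Z) (P : Set (Measure X)) (θ : Measure X → ℝ) :
    ℝ → ℝ≥0∞ :=
  modulus (fun P0 P1 => dH (push c P0) (push c P1)) P θ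

/-- Left limit at `m ∈ ℝ≥0∞` of a nondecreasing `ℝ≥0∞`-valued function on `[0,∞)`:
`f(m⁻) = sup_{0 ≤ y < m} f(y)`. -/
noncomputable def leftLimE (f : ℝ → ℝ≥0∞) (m : ℝ≥0∞) : ℝ≥0∞ :=
  ⨆ (y : ℝ) (_ : 0 ≤ y) (_ : ENNReal.ofReal y < m), f y

/-- Right limit at `x ∈ ℝ` of a nondecreasing `ℝ≥0∞`-valued function:
`f(x⁺) = inf_{y > x} f(y)`. -/
noncomputable def rightLimE (f : ℝ → ℝ≥0∞) (x : ℝ) : ℝ≥0∞ :=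
  ⨅ (y : ℝ) (_ : x < y), f y

/-- Left limit of a nondecreasing loss function at `m ∈ ℝ≥0∞`, with the convention
`l(0⁻) = l(0)`, as an element of `ℝ≥0∞`. -/
noncomputable def lossLeftLim (l : ℝ → ℝ) (m : ℝ≥0∞) : ℝ≥0∞ :=
  if m = 0 then ENNReal.ofReal (l 0)
  else ⨆ (y : ℝ) (_ : 0 ≤ y) (_ : ENNReal.ofReal y < m), ENNReal.ofReal (l y)

/-- A (randomized) test is a measurable function with values in `[0,1]`. -/
def IsTest (φ : Ω → ℝ) : Prop := Measurable φ ∧ ∀ ω, 0 ≤ φ ω ∧ φ ω ≤ 1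

/-- Risk of a test: `∫ φ dμ0 + ∫ (1 - φ) dμ1`. -/
noncomputable def testRisk (μ0 μ1 : Measure Ω) (φ : Ω → ℝ) : ℝ :=
  (∫ ω, φ ω ∂μ0) + ∫ ω, (1 - φ ω) ∂μ1

/-- Testing affinity of a pair of measures: `π(μ0, μ1) = inf_φ (∫ φ dμ0 + ∫ (1-φ) dμ1)`. -/
noncomputable def pairAffinity (μ0 μ1 : Measure Ω) : ℝ :=
  sInf {r : ℝ | ∃ φ : Ω → ℝ, IsTest φ ∧ r = testRisk μ0 μ1 φ}

/-- Testing affinity of two sets of measures: `π(M0, M1) = sup π(μ0, μ1)`. -/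
noncomputable def setAffinity (M0 M1 : Set (Measure Ω)) : ℝ :=
  sSup {r : ℝ | ∃ μ0 ∈ M0, ∃ μ1 ∈ M1, r = pairAffinity μ0 μ1}

/-- The set of finite convex combinations of elements of `M`. -/
def convComb (M : Set (Measure Ω)) : Set (Measure Ω) :=
  {μ | ∃ (m : ℕ) (w : Fin m → ℝ≥0∞) (ν : Fin m → Measure Ω),
    (∑ i, w i) = 1 ∧ (∀ i, ν i ∈ M) ∧ μ = ∑ i, w i • ν i}

/-- The upper affinity `η_A^{(n)}(Q, Δ)`, for the channel described through the map
`QPn : P ↦ Q P^{⊗n}`. -/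
noncomputable def etaA {Zn : Type*} [MeasurableSpace Zn] (QPn : Measure X → Measure Zn)
    (P : Set (Measure X)) (θ : Measure X → ℝ) (Δ : ℝ) : ℝ :=
  ⨆ t : ℝ, setAffinity (convComb (QPn '' {μ | μ ∈ P ∧ θ μ ≤ t}))
    (convComb (QPn '' {μ | μ ∈ P ∧ t + Δ ≤ θ μ}))

/-- The affinity `η_2^{(n)}(Q, Δ)` (no convex hulls). -/
noncomputable def eta2 {Zn : Type*} [MeasurableSpace Zn] (QPn : Measure X → Measure Zn)
    (P : Set (Measure X)) (θ : Measure X → ℝ) (Δ : ℝ) : ℝ :=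
  ⨆ t : ℝ, setAffinity (QPn '' {μ | μ ∈ P ∧ θ μ ≤ t}) (QPn '' {μ | μ ∈ P ∧ t + Δ ≤ θ μ})

/-- `Δ_A^{(n)}(Q, η) = sup {Δ ≥ 0 : η_A^{(n)}(Q, Δ) > η}`, as an element of `ℝ≥0∞`. -/
noncomputable def DeltaA {Zn : Type*} [MeasurableSpace Zn] (QPn : Measure X → Measure Zn)
    (P : Set (Measure X)) (θ : Measure X → ℝ) (η : ℝ) : ℝ≥0∞ :=
  ⨆ (Δ : ℝ) (_ : 0 ≤ Δ) (_ : η < etaA QPn P θ Δ), ENNReal.ofReal Δ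

/-- `Δ_2^{(n)}(Q, η) = sup {Δ ≥ 0 : η_2^{(n)}(Q, Δ) > η}`, as an element of `ℝ≥0∞`. -/
noncomputable def Delta2 {Zn : Type*} [MeasurableSpace Zn] (QPn : Measure X → Measure Zn)
    (P : Set (Measure X)) (θ : Measure X → ℝ) (η : ℝ) : ℝ≥0∞ :=
  ⨆ (Δ : ℝ) (_ : 0 ≤ Δ) (_ : η < eta2 QPn P θ Δ), ENNReal.ofReal Δ

/-- The privatized distribution `Q P^{⊗n}` of the observation vector. -/
noncomputable def privProd {Zn : Type*} [MeasurableSpace Zn] (n : ℕ)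
    (Q : (Fin n → X) → Measure Zn) (μ : Measure X) : Measure Zn :=
  (Measure.pi fun _ : Fin n => μ).bind Q

/-- The `Q`-privatized minimax risk `M_n(Q, P, θ)` (with values in `ℝ≥0∞`), where the channel
is described through the map `QPn : P ↦ Q P^{⊗n}`. -/
noncomputable def minimaxRisk {Zn : Type*} [MeasurableSpace Zn] (l : ℝ → ℝ)
    (QPn : Measure X → Measure Zn) (P : Set (Measure X)) (θ : Measure X → ℝ) : ℝ≥0∞ :=
  ⨅ (est : Zn → ℝ) (_ : Measurable est), ⨆ (μ : Measure X) (_ : μ ∈ P),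
    ∫⁻ z, ENNReal.ofReal (l |est z - θ μ|) ∂(QPn μ)

/-- Iterated sequential integral: `seqIntegral K n x g` is
`∫ ⋯ ∫ g(z_1,…,z_n) K_{n-1}(dz_n | x_n, z_{1:n-1}) ⋯ K_0(dz_1 | x_1)`. -/
noncomputable def seqIntegral (K : (i : ℕ) → X × (Fin i → Z) → Measure Z) :
    (n : ℕ) → (Fin n → X) → ((Fin n → Z) → ℝ≥0∞) → ℝ≥0∞
  | 0, _, g => g fun i => i.elim0
  | n + 1, x, g => seqIntegral K n (fun i => x i.castSucc)
      fun zpre => ∫⁻ zn, g (Fin.snoc zpre zn) ∂(K n (x (Fin.last n), zpre))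

/-- An `α`-sequentially interactive channel: `Q` is obtained by sequential composition of
Markov kernels `K i : X × Z^i → Z`, each of which satisfies the `α`-differential privacy
ratio bound in its `X`-argument. -/
def IsSeqInteractive (n : ℕ) (α : ℝ) (Q : Kernel (Fin n → X) (Fin n → Z)) : Prop :=
  ∃ K : (i : ℕ) → Kernel (X × (Fin i → Z)) Z,
    (∀ i, IsMarkovKernel (K i)) ∧
    (∀ (i : ℕ) (x x' : X) (zpre : Fin i → Z) (A : Set Z), MeasurableSet A →
      K i (x, zpre) A ≤ ENNReal.ofReal (Real.exp α) * K i (x', zpre) A) ∧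
    (∀ (x : Fin n → X) (A : Set (Fin n → Z)), MeasurableSet A →
      Q x A = seqIntegral (fun i p => K i p) n x (A.indicator fun _ => 1))

/-- The `α`-private minimax risk `M_{n,α}(P, θ)`: infimum over all output dimensions
`q ∈ ℕ` and all `α`-sequentially interactive channels from `X^n` to `(ℝ^q)^n`. -/
noncomputable def privMinimaxRisk (n : ℕ) (α : ℝ) (l : ℝ → ℝ) (P : Set (Measure X))
    (θ : Measure X → ℝ) : ℝ≥0∞ :=
  ⨅ (q : ℕ) (Q : Kernel (Fin n → X) (Fin n → (Fin q → ℝ))) (_ : IsMarkovKernel Q)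
    (_ : IsSeqInteractive n α Q),
      minimaxRisk l (privProd n fun x => Q x) P θ

/-- The mixture `λ P0 + (1-λ) P1` of two measures. -/
noncomputable def mix (lam : ℝ) (P0 P1 : Measure Ω) : Measure Ω :=
  ENNReal.ofReal lam • P0 + ENNReal.ofReal (1 - lam) • P1

/-- Convexity of a set of measures. -/
def ConvexMeasureSet (P : Set (Measure Ω)) : Prop :=
  ∀ P0 ∈ P, ∀ P1 ∈ P, ∀ lam : ℝ, 0 ≤ lam → lam ≤ 1 → mix lam P0 P1 ∈ P

/-- Linearity of a functional on a (convex) set of measures. -/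
def LinearFunctional (P : Set (Measure X)) (θ : Measure X → ℝ) : Prop :=
  ∀ P0 ∈ P, ∀ P1 ∈ P, ∀ lam : ℝ, 0 ≤ lam → lam ≤ 1 →
    θ (mix lam P0 P1) = lam * θ P0 + (1 - lam) * θ P1

/-- A family of measures is dominated if all its members are absolutely continuous with
respect to a single σ-finite measure. -/
def Dominated (M : Set (Measure Ω)) : Prop :=
  ∃ ν : Measure Ω, SigmaFinite ν ∧ ∀ μ ∈ M, μ ≪ ν

/-- Condition (A): the functional `θ` is bounded on `P`. -/
def CondA (P : Set (Measure X)) (θ : Measure X → ℝ) : Prop := ∃ c : ℝ, ∀ μ ∈ P, |θ μ| ≤ c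

/-- Condition (B): the loss `l : [0,∞) → [0,∞)` is nondecreasing, `l 0 = 0` and
`l(3t/2) ≤ a l(t)` for all `t ≥ 0`. -/
def CondB (l : ℝ → ℝ) (a : ℝ) : Prop :=
  (∀ u v : ℝ, 0 ≤ u → u ≤ v → l u ≤ l v) ∧ (∀ u : ℝ, 0 ≤ u → 0 ≤ l u) ∧ l 0 = 0 ∧
    ∀ u : ℝ, 0 ≤ u → l (3 / 2 * u) ≤ a * l u

/-- Sup-norm of a (bounded) function. -/
noncomputable def supNorm (f : X → ℝ) : ℝ := ⨆ x, |f x|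

/-- The binary privatization channel `Q_1^{(α,ℓ)}`, supported on `{-z0, z0}` with
`z0 = ‖ℓ‖_∞ (e^α + 1)/(e^α - 1)`, giving the point `z0` probability `(1 + ℓ(x)/z0)/2`. -/
noncomputable def binChannel (α : ℝ) (ℓ : X → ℝ) (x : X) : Measure ℝ :=
  ENNReal.ofReal ((1 + ℓ x / (supNorm ℓ * ((Real.exp α + 1) / (Real.exp α - 1)))) / 2) •
      Measure.dirac (supNorm ℓ * ((Real.exp α + 1) / (Real.exp α - 1))) +
    ENNReal.ofReal ((1 - ℓ x / (supNorm ℓ * ((Real.exp α + 1) / (Real.exp α - 1)))) / 2) •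
      Measure.dirac (-(supNorm ℓ * ((Real.exp α + 1) / (Real.exp α - 1))))

/-- `g_d(Q, η) = inf { d(P0, P1) : π(Q P0^{⊗n}, Q P1^{⊗n}) ≤ η }`, as an element of `ℝ≥0∞`
(with `inf ∅ = ∞`). -/
noncomputable def gDist {Zn : Type*} [MeasurableSpace Zn] (d : Measure X → Measure X → ℝ)
    (QPn : Measure X → Measure Zn) (P : Set (Measure X)) (η : ℝ) : ℝ≥0∞ :=
  ⨅ (P0 : Measure X) (_ : P0 ∈ P) (P1 : Measure X) (_ : P1 ∈ P)
    (_ : pairAffinity (QPn P0) (QPn P1) ≤ η), ENNReal.ofReal (d P0 P1)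

/-- Integral of a bounded measurable function against a finite signed measure, via the
Jordan decomposition. -/
noncomputable def sInt (φ : Ω → ℝ) (σ : MeasureTheory.SignedMeasure Ω) : ℝ :=
  (∫ ω, φ ω ∂σ.toJordanDecomposition.posPart) - ∫ ω, φ ω ∂σ.toJordanDecomposition.negPart

/-- Membership in the set `𝕋 = {φ ∈ L∞(μ) : a ≤ ∫ φ f dμ ≤ b  ∀ f ∈ L1(μ), ‖f‖_{L1} ≤ 1}`. -/
def memT (μ : Measure Ω) (a b : ℝ) (φ : Ω → ℝ) : Prop :=
  Measurable φ ∧ (∃ c : ℝ, ∀ᵐ ω ∂μ, |φ ω| ≤ c) ∧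
    ∀ f : Ω → ℝ, Integrable f μ → (∫ ω, |f ω| ∂μ) ≤ 1 →
      a ≤ (∫ ω, φ ω * f ω ∂μ) ∧ (∫ ω, φ ω * f ω ∂μ) ≤ b

/-- The function `G(s,t) = log((1-s)/(1-t)) / log((t/s)·(1-s)/(1-t))`, with `G(s,s) = s`. -/
noncomputable def Gfun (s t : ℝ) : ℝ :=
  if s = t then s
  else Real.log ((1 - s) / (1 - t)) / Real.log (t / s * ((1 - s) / (1 - t)))

section Statement1Aux

lemma isTest_zero : IsTest (fun _ : Ω => (0:ℝ)) :=
  ⟨measurable_const, fun _ => ⟨le_rfl, zero_le_one⟩⟩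

lemma IsTest.one_sub {φ : Ω → ℝ} (h : IsTest φ) : IsTest (fun ω => 1 - φ ω) :=
  ⟨measurable_const.sub h.1, fun ω => ⟨by simp only []; linarith [(h.2 ω).2],
    by simp only []; linarith [(h.2 ω).1]⟩⟩

lemma IsTest.combo {φ ψ : Ω → ℝ} (hφ : IsTest φ) (hψ : IsTest ψ) {a b : ℝ}
    (ha : 0 ≤ a) (hb : 0 ≤ b) (hab : a + b = 1) :
    IsTest (fun ω => a * φ ω + b * ψ ω) := by
  refine ⟨(hφ.1.const_mul a).add (hψ.1.const_mul b), fun ω => ⟨?_, ?_⟩⟩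
  · have h1 := (hφ.2 ω).1; have h2 := (hψ.2 ω).1
    positivity
  · have h1 := (hφ.2 ω).2; have h2 := (hψ.2 ω).2
    simp only []
    nlinarith [(hφ.2 ω).1, (hψ.2 ω).1]

lemma IsTest.integrable {φ : Ω → ℝ} (h : IsTest φ) (μ : Measure Ω) [IsFiniteMeasure μ] :
    Integrable φ μ := by
  refine (integrable_const (1:ℝ)).mono' h.1.aestronglyMeasurable ?_
  exact Filter.Eventually.of_forall fun ω => by
    rw [Real.norm_eq_abs, abs_le]; exact ⟨by linarith [(h.2 ω).1], (h.2 ω).2⟩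

lemma IsTest.mul_integrable {φ : Ω → ℝ} (h : IsTest φ) {ν : Measure Ω} {f : Ω → ℝ}
    (hf : Integrable f ν) : Integrable (fun ω => φ ω * f ω) ν := by
  refine hf.bdd_mul h.1.aestronglyMeasurable (c := 1) (Filter.Eventually.of_forall fun ω => ?_)
  rw [Real.norm_eq_abs, abs_le]; exact ⟨by linarith [(h.2 ω).1], (h.2 ω).2⟩

lemma abs_integral_test_mul_le {φ : Ω → ℝ} (h : IsTest φ) {ν : Measure Ω} {f : Ω → ℝ}
    (hf : Integrable f ν) : |∫ ω, φ ω * f ω ∂ν| ≤ ∫ ω, |f ω| ∂ν := by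
  have := norm_integral_le_integral_norm (fun ω => φ ω * f ω) (μ := ν)
  simp only [Real.norm_eq_abs] at this
  refine this.trans ?_
  refine integral_mono (h.mul_integrable hf).abs hf.abs fun ω => ?_
  rw [abs_mul]
  have h1 := (h.2 ω).1; have h2 := (h.2 ω).2
  nlinarith [abs_nonneg (f ω), abs_of_nonneg h1]



/-- Integrable functions (the index type for the weak topology). -/
def II (ν : Measure Ω) : Type _ := {f : Ω → ℝ // Integrable f ν}

/-- The pairing map sending a test to the family of its integrals against L¹ functions. -/
noncomputable def Jmap (ν : Measure Ω) (φ : Ω → ℝ) : II ν → ℝ := fun f => ∫ ω, φ ω * f.1 ω ∂ν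

/-- Image of the tests. -/
def TT (ν : Measure Ω) : Set (II ν → ℝ) := Jmap ν '' {φ | IsTest φ}

lemma mem_TT {ν : Measure Ω} {φ : Ω → ℝ} (h : IsTest φ) : Jmap ν φ ∈ TT ν :=
  ⟨φ, h, rfl⟩

lemma isCompact_closure_TT (ν : Measure Ω) : IsCompact (closure (TT ν)) := by
  have hsub : TT ν ⊆ Set.pi Set.univ (fun f : II ν => Set.Icc (-(∫ ω, |f.1 ω| ∂ν)) (∫ ω, |f.1 ω| ∂ν)) := by
    rintro _ ⟨φ, hφ, rfl⟩ f _
    have := abs_integral_test_mul_le hφ f.2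
    rw [Set.mem_Icc]
    simp only [Jmap]
    constructor <;> [linarith [neg_abs_le (∫ ω, φ ω * f.1 ω ∂ν)]; linarith [le_abs_self (∫ ω, φ ω * f.1 ω ∂ν)]]
  have hclosed : IsClosed (Set.pi Set.univ (fun f : II ν => Set.Icc (-(∫ ω, |f.1 ω| ∂ν)) (∫ ω, |f.1 ω| ∂ν))) :=
    isClosed_set_pi fun f _ => isClosed_Icc
  exact (isCompact_univ_pi fun f => isCompact_Icc).of_isClosed_subset isClosed_closure
    (closure_minimal hsub hclosed)

lemma convex_TT (ν : Measure Ω) : Convex ℝ (TT ν) := by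
  rintro _ ⟨φ, hφ, rfl⟩ _ ⟨ψ, hψ, rfl⟩ a b ha hb hab
  refine ⟨fun ω => a * φ ω + b * ψ ω, hφ.combo hψ ha hb hab, ?_⟩
  funext f
  simp only [Jmap, Pi.add_apply, Pi.smul_apply, smul_eq_mul]
  have h1 : a * ∫ ω, φ ω * f.1 ω ∂ν = ∫ ω, a * (φ ω * f.1 ω) ∂ν := by
    rw [← smul_eq_mul, ← integral_smul]; simp [smul_eq_mul]
  have h2 : b * ∫ ω, ψ ω * f.1 ω ∂ν = ∫ ω, b * (ψ ω * f.1 ω) ∂ν := by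
    rw [← smul_eq_mul, ← integral_smul]; simp [smul_eq_mul]
  rw [h1, h2, ← integral_add ((hφ.mul_integrable f.2).const_mul a) ((hψ.mul_integrable f.2).const_mul b)]
  congr 1; funext ω; ring

lemma closure_TT_prop {ν : Measure Ω} {ℓ : II ν → ℝ} (hℓ : ℓ ∈ closure (TT ν))
    {p : (II ν → ℝ) → Prop} (hp : IsClosed {x | p x}) (h : ∀ φ, IsTest φ → p (Jmap ν φ)) :
    p ℓ := by
  have : closure (TT ν) ⊆ {x | p x} :=
    closure_minimal (by rintro _ ⟨φ, hφ, rfl⟩; exact h φ hφ) hp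
  exact this hℓ



set_option maxHeartbeats 2000000 in
theorem closure_TT_rep {ν : Measure Ω} [IsFiniteMeasure ν] {ℓ : II ν → ℝ}
    (hℓ : ℓ ∈ closure (TT ν)) : ∃ φ : Ω → ℝ, IsTest φ ∧ Jmap ν φ = ℓ := by
  classical
  -- additivity
  have hadd : ∀ f g h : II ν, (h.1 = fun ω => f.1 ω + g.1 ω) → ℓ h = ℓ f + ℓ g := by
    intro f g h hh
    refine closure_TT_prop hℓ (p := fun x => x h = x f + x g)
      (isClosed_eq (continuous_apply h) ((continuous_apply f).add (continuous_apply g)))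
      (fun φ hφ => ?_)
    simp only [Jmap, hh]
    rw [← integral_add (hφ.mul_integrable f.2) (hφ.mul_integrable g.2)]
    congr 1; funext ω; ring
  have hsmul : ∀ (a : ℝ) (f g : II ν), (g.1 = fun ω => a * f.1 ω) → ℓ g = a * ℓ f := by
    intro a f g hg
    refine closure_TT_prop hℓ (p := fun x => x g = a * x f)
      (isClosed_eq (continuous_apply g) (continuous_const.mul (continuous_apply f)))
      (fun φ hφ => ?_)
    simp only [Jmap, hg]
    rw [← smul_eq_mul, ← integral_smul]
    congr 1; funext ω; simp [smul_eq_mul]; ring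
  have hcongr : ∀ f g : II ν, f.1 =ᵐ[ν] g.1 → ℓ f = ℓ g := by
    intro f g hfg
    refine closure_TT_prop hℓ (p := fun x => x f = x g)
      (isClosed_eq (continuous_apply f) (continuous_apply g)) (fun φ hφ => ?_)
    exact integral_congr_ae (hfg.mono fun ω hω => by simp only [hω])
  have hpos : ∀ f : II ν, 0 ≤ᵐ[ν] f.1 → 0 ≤ ℓ f ∧ ℓ f ≤ ∫ ω, f.1 ω ∂ν := by
    intro f hf
    refine closure_TT_prop hℓ (p := fun x => 0 ≤ x f ∧ x f ≤ ∫ ω, f.1 ω ∂ν)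
      (by rw [show {x : II ν → ℝ | 0 ≤ x f ∧ x f ≤ ∫ ω, f.1 ω ∂ν}
            = {x | 0 ≤ x f} ∩ {x | x f ≤ ∫ ω, f.1 ω ∂ν} from rfl]
          exact (isClosed_le continuous_const (continuous_apply f)).inter
            (isClosed_le (continuous_apply f) continuous_const))
      (fun φ hφ => ?_)
    constructor
    · exact integral_nonneg_of_ae (hf.mono fun ω hω => mul_nonneg (hφ.2 ω).1 hω)
    · refine integral_mono_ae (hφ.mul_integrable f.2) f.2 (hf.mono fun ω hω => ?_)
      simp only [Pi.zero_apply] at hω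
      show φ ω * f.1 ω ≤ f.1 ω
      nlinarith [(hφ.2 ω).1, (hφ.2 ω).2]
  have habs : ∀ f : II ν, |ℓ f| ≤ ∫ ω, |f.1 ω| ∂ν := by
    intro f
    have hposint : Integrable (fun ω => max (f.1 ω) 0) ν := f.2.pos_part
    have hnegint : Integrable (fun ω => max (-f.1 ω) 0) ν := f.2.neg_part
    have h1 : ℓ ⟨fun ω => max (f.1 ω) 0, hposint⟩ = ℓ f + ℓ ⟨fun ω => max (-f.1 ω) 0, hnegint⟩ := by
      refine hadd f ⟨_, hnegint⟩ ⟨_, hposint⟩ (funext fun ω => ?_)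
      show max (f.1 ω) 0 = f.1 ω + max (-f.1 ω) 0
      rcases le_total (f.1 ω) 0 with h | h
      · rw [max_eq_right h, max_eq_left (by linarith)]; ring
      · rw [max_eq_left h, max_eq_right (by linarith)]; ring
    have h2 := hpos ⟨_, hposint⟩ (Filter.Eventually.of_forall fun ω => le_max_right _ _)
    have h3 := hpos ⟨_, hnegint⟩ (Filter.Eventually.of_forall fun ω => le_max_right _ _)
    have h4 : ∫ ω, |f.1 ω| ∂ν
        = (∫ ω, max (f.1 ω) 0 ∂ν) + ∫ ω, max (-f.1 ω) 0 ∂ν := by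
      rw [← integral_add hposint hnegint]
      refine integral_congr_ae (Filter.Eventually.of_forall fun ω => ?_)
      show |f.1 ω| = max (f.1 ω) 0 + max (-f.1 ω) 0
      rcases le_total (f.1 ω) 0 with h | h
      · rw [abs_of_nonpos h, max_eq_right h, max_eq_left (by linarith)]; ring
      · rw [abs_of_nonneg h, max_eq_left h, max_eq_right (by linarith)]; ring
    rw [abs_le]
    constructor <;> [linarith [h2.1, h2.2, h3.1, h3.2]; linarith [h2.1, h2.2, h3.1, h3.2]]
  -- the L² functional
  have hι : ∀ u : Lp ℝ 2 ν, Integrable (⇑u) ν := fun u => (Lp.memLp u).integrable one_le_two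
  set L₀ : Lp ℝ 2 ν →ₗ[ℝ] ℝ :=
    { toFun := fun u => ℓ ⟨⇑u, hι u⟩
      map_add' := by
        intro u v
        have h1 : ℓ ⟨⇑(u + v), hι _⟩ = ℓ ⟨fun ω => u ω + v ω, (hι u).add (hι v)⟩ :=
          hcongr _ _ (Lp.coeFn_add u v)
        show ℓ ⟨⇑(u + v), hι _⟩ = ℓ ⟨⇑u, hι u⟩ + ℓ ⟨⇑v, hι v⟩
        rw [h1]; exact hadd ⟨⇑u, hι u⟩ ⟨⇑v, hι v⟩ _ rfl
      map_smul' := by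
        intro a u
        have h1 : ℓ ⟨⇑(a • u), hι _⟩ = ℓ ⟨fun ω => a * u ω, ((hι u).const_mul a)⟩ := by
          refine hcongr _ _ ((Lp.coeFn_smul a u).mono fun ω hω => ?_)
          simp only [hω, Pi.smul_apply, smul_eq_mul]
        show ℓ ⟨⇑(a • u), hι _⟩ = (RingHom.id ℝ) a • ℓ ⟨⇑u, hι u⟩
        simp only [RingHom.id_apply, smul_eq_mul]
        rw [h1]
        exact hsmul a ⟨⇑u, hι u⟩ _ rfl } with hL₀
  have hbound : ∃ C : ℝ, ∀ u : Lp ℝ 2 ν, ‖L₀ u‖ ≤ C * ‖u‖ := by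
    refine ⟨((ν Set.univ) ^ ((1:ℝ)/2)).toReal, fun u => ?_⟩
    have h1 : ‖L₀ u‖ ≤ ∫ ω, |u ω| ∂ν := habs ⟨⇑u, hι u⟩
    have h2 : ∫ ω, |u ω| ∂ν = (eLpNorm (⇑u) 1 ν).toReal := by
      rw [eLpNorm_one_eq_lintegral_enorm,
        ← integral_norm_eq_lintegral_enorm (Lp.aestronglyMeasurable u)]
      simp [Real.norm_eq_abs]
    have h3 : eLpNorm (⇑u) 1 ν ≤ eLpNorm (⇑u) 2 ν * (ν Set.univ) ^ ((1:ℝ)/1 - (1:ℝ)/2) := by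
      simpa using eLpNorm_le_eLpNorm_mul_rpow_measure_univ (μ := ν) one_le_two
        (Lp.aestronglyMeasurable u)
    have hfin : eLpNorm (⇑u) 2 ν * (ν Set.univ) ^ ((1:ℝ)/1 - (1:ℝ)/2) ≠ ⊤ := by
      refine ENNReal.mul_ne_top (Lp.eLpNorm_ne_top u) ?_
      exact (ENNReal.rpow_lt_top_of_nonneg (by norm_num) (measure_ne_top ν _)).ne
    have h4 := ENNReal.toReal_mono hfin h3
    rw [h2] at h1
    rw [ENNReal.toReal_mul] at h4
    have h5 : ((ν Set.univ) ^ ((1:ℝ)/1 - (1:ℝ)/2)).toReal = ((ν Set.univ) ^ ((1:ℝ)/2)).toReal := by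
      norm_num
    rw [Lp.norm_def]
    calc ‖L₀ u‖ ≤ (eLpNorm (⇑u) 1 ν).toReal := h1
      _ ≤ (eLpNorm (⇑u) 2 ν).toReal * ((ν Set.univ) ^ ((1:ℝ)/1 - (1:ℝ)/2)).toReal := h4
      _ = ((ν Set.univ) ^ ((1:ℝ)/2)).toReal * (eLpNorm (⇑u) 2 ν).toReal := by rw [h5]; ring
  set L : Lp ℝ 2 ν →L[ℝ] ℝ := L₀.mkContinuousOfExistsBound hbound with hL
  set ψE : Lp ℝ 2 ν := (InnerProductSpace.toDual ℝ (Lp ℝ 2 ν)).symm L with hψE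
  have hrep : ∀ u : Lp ℝ 2 ν, ∫ ω, ψE ω * u ω ∂ν = ℓ ⟨⇑u, hι u⟩ := by
    intro u
    have h0 : (inner ℝ ψE u : ℝ) = L u := InnerProductSpace.toDual_symm_apply
    rw [L2.inner_def] at h0
    simp only [RCLike.inner_apply, starRingEnd_apply, star_trivial] at h0
    exact Eq.trans (integral_congr_ae (Filter.Eventually.of_forall fun ω => mul_comm _ _)) h0
  have hψint : Integrable (⇑ψE) ν := hι ψE
  have hind : ∀ A : Set Ω, MeasurableSet A →
      0 ≤ ∫ ω in A, ψE ω ∂ν ∧ ∫ ω in A, ψE ω ∂ν ≤ (ν A).toReal := by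
    intro A hA
    have hindint : Integrable (A.indicator (fun _ => (1:ℝ))) ν :=
      (integrable_const (1:ℝ)).indicator hA
    have hmem : MemLp (A.indicator (fun _ => (1:ℝ))) 2 ν := by
      refine MemLp.mono_exponent ?_ le_top
      refine memLp_top_of_bound ((measurable_const.indicator hA).aestronglyMeasurable) 1
        (Filter.Eventually.of_forall fun ω => ?_)
      rw [Real.norm_eq_abs]
      by_cases h : ω ∈ A <;> simp [h]
    set u := hmem.toLp _ with hu_def
    have hu : ⇑u =ᵐ[ν] A.indicator (fun _ => 1) := hmem.coeFn_toLp
    have h1 : ℓ ⟨⇑u, hι u⟩ = ℓ ⟨A.indicator (fun _ => 1), hindint⟩ := hcongr _ _ hu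
    have h2 := hpos ⟨A.indicator (fun _ => 1), hindint⟩
      (Filter.Eventually.of_forall fun ω => Set.indicator_nonneg (fun _ _ => zero_le_one) ω)
    have h3 : ∫ ω, ψE ω * u ω ∂ν = ∫ ω in A, ψE ω ∂ν := by
      rw [← integral_indicator hA]
      refine integral_congr_ae (hu.mono fun ω hω => ?_)
      show ψE ω * u ω = A.indicator (fun ω => ψE ω) ω
      rw [hω]
      by_cases h : ω ∈ A <;> simp [Set.indicator_of_mem, Set.indicator_of_notMem, h]
    have h4 : ∫ ω, (⟨A.indicator (fun _ => 1), hindint⟩ : II ν).1 ω ∂ν = (ν A).toReal := by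
      show ∫ ω, A.indicator (fun _ => (1:ℝ)) ω ∂ν = (ν A).toReal
      rw [integral_indicator hA]
      simp [setIntegral_const]; rfl
    rw [hrep u, h1] at h3
    refine ⟨by rw [← h3]; exact h2.1, ?_⟩
    rw [← h3]; rw [h4] at h2; exact h2.2
  have hge : 0 ≤ᵐ[ν] ⇑ψE :=
    ae_nonneg_of_forall_setIntegral_nonneg hψint (fun s hs _ => (hind s hs).1)
  have hle : ∀ᵐ ω ∂ν, ψE ω ≤ 1 := by
    have h0 : 0 ≤ᵐ[ν] (fun ω => 1 - ψE ω) := by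
      refine ae_nonneg_of_forall_setIntegral_nonneg ((integrable_const 1).sub hψint)
        (fun s hs _ => ?_)
      rw [integral_sub (integrable_const 1).integrableOn hψint.integrableOn, setIntegral_const]
      have := (hind s hs).2
      simp only [smul_eq_mul, mul_one, Measure.real]
      linarith
    exact h0.mono fun ω h => by simp only [Pi.zero_apply] at h; linarith
  -- the test representing ℓ
  have hψsm := (Lp.aestronglyMeasurable ψE)
  set ψmk : Ω → ℝ := hψsm.mk ⇑ψE with hψmk_def
  have hψmk_eq : ⇑ψE =ᵐ[ν] ψmk := hψsm.ae_eq_mk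
  have hψmk_meas : Measurable ψmk := hψsm.stronglyMeasurable_mk.measurable
  set φ0 : Ω → ℝ := fun ω => max 0 (min 1 (ψmk ω)) with hφ0_def
  have hφ0test : IsTest φ0 :=
    ⟨measurable_const.max (measurable_const.min hψmk_meas),
      fun ω => ⟨le_max_left _ _, max_le zero_le_one (min_le_left _ _)⟩⟩
  have hφ0eq : ⇑ψE =ᵐ[ν] φ0 := by
    filter_upwards [hψmk_eq, hge, hle] with ω h1 h2 h3
    simp only [Pi.zero_apply] at h2
    show ψE ω = max 0 (min 1 (ψmk ω))
    rw [← h1, min_eq_right h3, max_eq_right h2]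
  refine ⟨φ0, hφ0test, funext fun f => ?_⟩
  -- truncation argument to extend from L² to L¹
  have hfsm := f.2.1
  set fmk : Ω → ℝ := hfsm.mk f.1 with hfmk_def
  have hfeq : f.1 =ᵐ[ν] fmk := hfsm.ae_eq_mk
  have hfmk_meas : Measurable fmk := hfsm.stronglyMeasurable_mk.measurable
  have hfmk_int : Integrable fmk ν := f.2.congr hfeq
  set trunc : ℕ → Ω → ℝ := fun n ω => max (-(n:ℝ)) (min (n:ℝ) (fmk ω)) with htrunc_def
  have htm : ∀ n, Measurable (trunc n) := fun n =>
    measurable_const.max (measurable_const.min hfmk_meas)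
  have htabs : ∀ n ω, |trunc n ω| ≤ |fmk ω| := by
    intro n ω
    rw [abs_le]
    constructor
    · exact le_max_of_le_right (le_min (le_trans (neg_nonpos.2 (abs_nonneg _)) (Nat.cast_nonneg n))
        (neg_abs_le _))
    · exact max_le (le_trans (neg_nonpos.2 (Nat.cast_nonneg n)) (abs_nonneg _))
        ((min_le_right _ _).trans (le_abs_self _))
  have htb : ∀ n ω, ‖trunc n ω‖ ≤ (n:ℝ) := by
    intro n ω
    rw [Real.norm_eq_abs, abs_le]
    exact ⟨le_max_left _ _, max_le (le_trans (neg_nonpos.2 (Nat.cast_nonneg n)) (Nat.cast_nonneg n))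
      (min_le_left _ _)⟩
  have hmem2 : ∀ n, MemLp (trunc n) 2 ν := fun n =>
    (memLp_top_of_bound (htm n).aestronglyMeasurable n
      (Filter.Eventually.of_forall (htb n))).mono_exponent le_top
  have htint : ∀ n, Integrable (trunc n) ν := fun n => (hmem2 n).integrable one_le_two
  have hptwise : ∀ ω, ∀ᶠ n in Filter.atTop, trunc n ω = fmk ω := by
    intro ω
    filter_upwards [Filter.eventually_ge_atTop ⌈|fmk ω|⌉₊] with n hn
    have hn' : |fmk ω| ≤ (n:ℝ) := le_trans (Nat.le_ceil _) (Nat.cast_le.2 hn)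
    rw [abs_le] at hn'
    show max (-(n:ℝ)) (min (n:ℝ) (fmk ω)) = fmk ω
    rw [min_eq_right hn'.2, max_eq_right hn'.1]
  have key1 : ∀ n, ℓ ⟨trunc n, htint n⟩ = ∫ ω, φ0 ω * trunc n ω ∂ν := by
    intro n
    set u := (hmem2 n).toLp _ with hu_def
    have hu : ⇑u =ᵐ[ν] trunc n := (hmem2 n).coeFn_toLp
    rw [← hcongr ⟨⇑u, hι u⟩ ⟨trunc n, htint n⟩ hu, ← hrep u]
    refine integral_congr_ae ?_
    filter_upwards [hφ0eq, hu] with ω h1 h2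
    rw [h1, h2]
  -- limit on the ℓ side
  have hDlim : Filter.Tendsto (fun n => ∫ ω, |fmk ω - trunc n ω| ∂ν)
      Filter.atTop (nhds 0) := by
    have h0 : (0:ℝ) = ∫ ω, (0:ℝ) ∂ν := by simp
    rw [h0]
    refine tendsto_integral_of_dominated_convergence (fun ω => 2 * |fmk ω|)
      (fun n => ((hfmk_int.sub (htint n)).abs).aestronglyMeasurable)
      (hfmk_int.abs.const_mul 2) (fun n => Filter.Eventually.of_forall fun ω => ?_)
      (Filter.Eventually.of_forall fun ω => ?_)
    · rw [Real.norm_eq_abs, abs_abs]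
      calc |fmk ω - trunc n ω| ≤ |fmk ω| + |trunc n ω| := abs_sub _ _
        _ ≤ 2 * |fmk ω| := by linarith [htabs n ω]
    · refine Filter.Tendsto.congr' ?_ tendsto_const_nhds
      filter_upwards [hptwise ω] with n hn
      rw [hn, sub_self, abs_zero]
  have hler : ∀ n, |ℓ f - ℓ ⟨trunc n, htint n⟩| ≤ ∫ ω, |fmk ω - trunc n ω| ∂ν := by
    intro n
    have hdiffint : Integrable (fun ω => fmk ω - trunc n ω) ν := hfmk_int.sub (htint n)
    have h1 : ℓ ⟨fmk, hfmk_int⟩ = ℓ ⟨trunc n, htint n⟩ + ℓ ⟨fun ω => fmk ω - trunc n ω, hdiffint⟩ :=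
      hadd ⟨trunc n, htint n⟩ ⟨_, hdiffint⟩ ⟨fmk, hfmk_int⟩ (funext fun ω => by
        show fmk ω = trunc n ω + (fmk ω - trunc n ω); ring)
    have h2 : ℓ f = ℓ ⟨fmk, hfmk_int⟩ := hcongr _ _ hfeq
    rw [h2, h1]
    have := habs ⟨fun ω => fmk ω - trunc n ω, hdiffint⟩
    simp only [add_sub_cancel_left] at *
    exact this
  have key2 : Filter.Tendsto (fun n => ℓ ⟨trunc n, htint n⟩) Filter.atTop (nhds (ℓ f)) := by
    have hz : Filter.Tendsto (fun n => ℓ f - ℓ ⟨trunc n, htint n⟩) Filter.atTop (nhds 0) :=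
      squeeze_zero_norm (fun n => by rw [Real.norm_eq_abs]; exact hler n) hDlim
    have := (tendsto_const_nhds (x := ℓ f) (f := Filter.atTop)).sub hz
    simpa using this
  -- limit on the integral side
  have key3 : Filter.Tendsto (fun n => ∫ ω, φ0 ω * trunc n ω ∂ν) Filter.atTop
      (nhds (∫ ω, φ0 ω * f.1 ω ∂ν)) := by
    have h0 : ∫ ω, φ0 ω * f.1 ω ∂ν = ∫ ω, φ0 ω * fmk ω ∂ν :=
      integral_congr_ae (hfeq.mono fun ω hω => by simp only [hω])
    rw [h0]
    refine tendsto_integral_of_dominated_convergence (fun ω => |fmk ω|)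
      (fun n => (hφ0test.mul_integrable (htint n)).aestronglyMeasurable)
      hfmk_int.abs (fun n => Filter.Eventually.of_forall fun ω => ?_)
      (Filter.Eventually.of_forall fun ω => ?_)
    · rw [Real.norm_eq_abs, abs_mul]
      have h1 := (hφ0test.2 ω).1
      have h2 := (hφ0test.2 ω).2
      have := htabs n ω
      nlinarith [abs_nonneg (trunc n ω), abs_of_nonneg h1]
    · refine Filter.Tendsto.congr' ?_ tendsto_const_nhds
      filter_upwards [hptwise ω] with n hn
      rw [hn]
  have := tendsto_nhds_unique
    (key2.congr (fun n => key1 n)) key3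
  exact this.symm




lemma weight_ne_top {m : ℕ} {w : Fin m → ℝ≥0∞} (hw : ∑ i, w i = 1) (i : Fin m) : w i ≠ ⊤ := by
  refine ne_top_of_le_ne_top ?_ (Finset.single_le_sum (fun j _ => (zero_le : 0 ≤ w j)) (Finset.mem_univ i))
  rw [hw]; exact one_ne_top

lemma toReal_weight_sum {m : ℕ} {w : Fin m → ℝ≥0∞} (hw : ∑ i, w i = 1) :
    ∑ i, (w i).toReal = 1 := by
  rw [← ENNReal.toReal_sum (fun i _ => weight_ne_top hw i), hw, ENNReal.toReal_one]

lemma integral_test_mixture {m : ℕ} {w : Fin m → ℝ≥0∞} (hw : ∑ i, w i = 1)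
    (κ : Fin m → Measure Ω) [hκf : ∀ i, IsFiniteMeasure (κ i)]
    {φ : Ω → ℝ} (hφ : IsTest φ) :
    ∫ ω, φ ω ∂(∑ i, w i • κ i) = ∑ i, (w i).toReal * ∫ ω, φ ω ∂(κ i) := by
  rw [integral_finset_sum_measure (fun i _ => (hφ.integrable (κ i)).smul_measure (weight_ne_top hw i))]
  refine Finset.sum_congr rfl fun i _ => ?_
  rw [integral_smul_measure]; rfl

lemma convex_sum_le {m : ℕ} {W : Fin m → ℝ} (hW : ∀ i, 0 ≤ W i) (hWs : ∑ i, W i = 1)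
    {t : Fin m → ℝ} {r : ℝ} (h : ∀ i, t i ≤ r) : ∑ i, W i * t i ≤ r := by
  calc ∑ i, W i * t i ≤ ∑ i, W i * r :=
        Finset.sum_le_sum fun i _ => mul_le_mul_of_nonneg_left (h i) (hW i)
    _ = (∑ i, W i) * r := by rw [Finset.sum_mul]
    _ = r := by rw [hWs, one_mul]

lemma convex_sum_ge {m : ℕ} {W : Fin m → ℝ} (hW : ∀ i, 0 ≤ W i) (hWs : ∑ i, W i = 1)
    {t : Fin m → ℝ} {r : ℝ} (h : ∀ i, r ≤ t i) : r ≤ ∑ i, W i * t i := by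
  calc r = (∑ i, W i) * r := by rw [hWs, one_mul]
    _ = ∑ i, W i * r := by rw [Finset.sum_mul]
    _ ≤ ∑ i, W i * t i :=
        Finset.sum_le_sum fun i _ => mul_le_mul_of_nonneg_left (h i) (hW i)

/-- Risk of a test against a pair of mixtures with common weights. -/
lemma testRisk_mixture {m : ℕ} {w : Fin m → ℝ≥0∞} (hw : ∑ i, w i = 1)
    (κ τ : Fin m → Measure Ω) [∀ i, IsFiniteMeasure (κ i)] [∀ i, IsFiniteMeasure (τ i)]
    {φ : Ω → ℝ} (hφ : IsTest φ) :
    testRisk (∑ i, w i • κ i) (∑ i, w i • τ i) φ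
      = ∑ i, (w i).toReal * testRisk (κ i) (τ i) φ := by
  unfold testRisk
  rw [integral_test_mixture hw κ hφ, integral_test_mixture hw τ hφ.one_sub,
    ← Finset.sum_add_distrib]
  refine Finset.sum_congr rfl fun i _ => by ring

/-- The easy direction: convex combinations do not increase the sup-risk. -/
lemma testRisk_conv_le_sup {M0 M1 : Set (Measure Ω)}
    (hprob : ∀ μ ∈ M0 ∪ M1, IsProbabilityMeasure μ)
    {ν0 ν1 : Measure Ω} (hν0 : ν0 ∈ convComb M0) (hν1 : ν1 ∈ convComb M1)
    {φ : Ω → ℝ} (hφ : IsTest φ) :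
    ((testRisk ν0 ν1 φ : ℝ) : EReal) ≤
      ⨆ (μ0 : Measure Ω) (_ : μ0 ∈ M0) (μ1 : Measure Ω) (_ : μ1 ∈ M1),
        ((testRisk μ0 μ1 φ : ℝ) : EReal) := by
  obtain ⟨m, w, κ, hw, hκ, rfl⟩ := hν0
  obtain ⟨m', u, τ, hu, hτ, rfl⟩ := hν1
  haveI : ∀ i, IsFiniteMeasure (κ i) := fun i =>
    haveI := hprob _ (Or.inl (hκ i)); inferInstance
  haveI : ∀ j, IsFiniteMeasure (τ j) := fun j =>
    haveI := hprob _ (Or.inr (hτ j)); inferInstance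
  set S : EReal := ⨆ (μ0 : Measure Ω) (_ : μ0 ∈ M0) (μ1 : Measure Ω) (_ : μ1 ∈ M1),
    ((testRisk μ0 μ1 φ : ℝ) : EReal) with hS
  have hm : 0 < m := by
    by_contra h
    push_neg at h
    interval_cases m
    simp at hw
  have hm' : 0 < m' := by
    by_contra h
    push_neg at h
    interval_cases m'
    simp at hu
  have hmem : ∀ (i : Fin m) (j : Fin m'), ((testRisk (κ i) (τ j) φ : ℝ) : EReal) ≤ S := by
    intro i j
    rw [hS]
    exact le_iSup_of_le (κ i) (le_iSup_of_le (hκ i) (le_iSup_of_le (τ j)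
      (le_iSup_of_le (hτ j) le_rfl)))
  rcases eq_top_or_lt_top S with htop | htop
  · rw [htop]; exact le_top
  have hbot : S ≠ ⊥ := by
    refine ne_bot_of_le_ne_bot ?_ (hmem ⟨0, hm⟩ ⟨0, hm'⟩)
    exact EReal.coe_ne_bot _
  set r : ℝ := S.toReal with hr
  have hSr : S = (r : EReal) := (EReal.coe_toReal htop.ne hbot).symm
  have hler : ∀ (i : Fin m) (j : Fin m'), testRisk (κ i) (τ j) φ ≤ r := by
    intro i j
    have := hmem i j
    rw [hSr] at this
    exact_mod_cast this
  rw [hSr]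
  refine EReal.coe_le_coe_iff.2 ?_
  set W := fun i => (w i).toReal
  set U := fun j => (u j).toReal
  set A := fun i => ∫ ω, φ ω ∂(κ i)
  set B := fun j => ∫ ω, (1 - φ ω) ∂(τ j)
  have hWU : ∀ i, 0 ≤ W i := fun i => ENNReal.toReal_nonneg
  have hUU : ∀ j, 0 ≤ U j := fun j => ENNReal.toReal_nonneg
  have hcalc : testRisk (∑ i, w i • κ i) (∑ j, u j • τ j) φ
      = (∑ i, W i * A i) + ∑ j, U j * B j := by
    unfold testRisk
    rw [integral_test_mixture hw κ hφ, integral_test_mixture hu τ hφ.one_sub]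
  rw [hcalc]
  have hstep1 : ∀ i, A i + ∑ j, U j * B j ≤ r := by
    intro i
    have : ∑ j, U j * (A i + B j) ≤ r :=
      convex_sum_le hUU (toReal_weight_sum hu) (fun j => hler i j)
    calc A i + ∑ j, U j * B j = ∑ j, U j * (A i + B j) := by
          rw [Finset.sum_congr rfl (fun j _ => mul_add (U j) (A i) (B j)),
            Finset.sum_add_distrib, ← Finset.sum_mul, toReal_weight_sum hu, one_mul]
      _ ≤ r := this
  calc (∑ i, W i * A i) + ∑ j, U j * B j
      = ∑ i, W i * (A i + ∑ j, U j * B j) := by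
        rw [Finset.sum_congr rfl (fun i _ => mul_add (W i) (A i) _),
          Finset.sum_add_distrib, ← Finset.sum_mul, toReal_weight_sum hw, one_mul]
    _ ≤ r := convex_sum_le hWU (toReal_weight_sum hw) hstep1



/-- Separation of a compact convex set from the "all-coordinates ≤ c" corner:
produces simplex weights witnessing the minimax value. -/
lemma simplex_separation {ι : Type*} [Fintype ι] [Nonempty ι] {C : Set (ι → ℝ)}
    (hCconv : Convex ℝ C) (hCcomp : IsCompact C) (hCne : C.Nonempty) {c : ℝ}
    (hC : ∀ v ∈ C, ∃ j, c < v j) :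
    ∃ W : ι → ℝ, (∀ j, 0 ≤ W j) ∧ (∑ j, W j = 1) ∧ ∀ v ∈ C, c ≤ ∑ j, W j * v j := by
  classical
  set Q : Set (ι → ℝ) := {v | ∀ j, v j ≤ c} with hQdef
  have hQconv : Convex ℝ Q := by
    intro v hv w hw a b ha hb hab
    intro j
    have h1 := hv j
    have h2 := hw j
    show a * v j + b * w j ≤ c
    have e1 : a * v j ≤ a * c := mul_le_mul_of_nonneg_left h1 ha
    have e2 : b * w j ≤ b * c := mul_le_mul_of_nonneg_left h2 hb
    have e3 : a * c + b * c = c := by rw [← add_mul, hab, one_mul]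
    linarith
  have hQclosed : IsClosed Q := by
    have : Q = ⋂ j, {v : ι → ℝ | v j ≤ c} := by
      ext v; simp [hQdef, Set.mem_iInter]
    rw [this]
    exact isClosed_iInter fun j => isClosed_le (continuous_apply j) continuous_const
  have hdisj : Disjoint C Q := Set.disjoint_left.2 fun v hv hvQ => by
    obtain ⟨j, hj⟩ := hC v hv
    exact absurd (hvQ j) (not_le.2 hj)
  obtain ⟨F, u, t, hFC, hut, hFQ⟩ :=
    geometric_hahn_banach_compact_closed hCconv hCcomp hQconv hQclosed hdisj
  set e : ι → ι → ℝ := fun j => Pi.single j (1:ℝ) with he_def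
  set α : ι → ℝ := fun j => F (e j) with hα_def
  have hFdec : ∀ y : ι → ℝ, F y = ∑ j, y j * α j := by
    intro y
    have h1 : y = ∑ j, Pi.single j (y j) := by
      funext k
      rw [Finset.sum_apply]
      exact (Fintype.sum_pi_single k y).symm
    have h2 : ∀ j, Pi.single j (y j) = y j • e j := by
      intro j
      funext k
      simp only [he_def, Pi.smul_apply, smul_eq_mul, Pi.single_apply]
      split <;> simp
    calc F y = F (∑ j, Pi.single j (y j)) := by rw [← h1]
      _ = ∑ j, F (Pi.single j (y j)) := map_sum F _ _
      _ = ∑ j, y j * α j := Finset.sum_congr rfl fun j _ => by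
            rw [h2 j, F.map_smul, smul_eq_mul]
  have hc1Q : (fun _ : ι => c) ∈ Q := fun k => le_rfl
  have hQmem : ∀ (s : ℝ) (j : ι), 0 ≤ s →
      ((fun _ => c) - s • e j : ι → ℝ) ∈ Q := by
    intro s j hs k
    show ((fun _ : ι => c) - s • e j) k ≤ c
    simp only [he_def, Pi.sub_apply, Pi.smul_apply, smul_eq_mul, Pi.single_apply]
    split
    · nlinarith
    · simp
  have hα : ∀ j, α j ≤ 0 := by
    intro j
    by_contra h
    push_neg at h
    have h1 := hFQ _ hc1Q
    set s := (F (fun _ => c) - t) / α j with hs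
    have hs0 : 0 ≤ s := le_of_lt (div_pos (by linarith) h)
    have h2 := hFQ _ (hQmem s j hs0)
    rw [map_sub, F.map_smul, smul_eq_mul] at h2
    have hval : F (e j) = α j := rfl
    rw [hval, hs, div_mul_cancel₀ _ (ne_of_gt h)] at h2
    linarith
  set β := ∑ j, -α j with hβ_def
  have hβ0 : 0 ≤ β := Finset.sum_nonneg fun j _ => by linarith [hα j]
  have hFc1 : F (fun _ => c) = -(c * β) := by
    rw [hFdec]
    simp only [hβ_def, Finset.sum_neg_distrib, mul_neg, neg_neg, Finset.mul_sum]
  obtain ⟨v0, hv0⟩ := hCne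
  have hβpos : 0 < β := by
    rcases hβ0.lt_or_eq with hlt | heq
    · exact hlt
    exfalso
    have hzero : ∀ j, α j = 0 := by
      intro j
      have := (Finset.sum_eq_zero_iff_of_nonneg
        (fun j (_ : j ∈ Finset.univ) => by linarith [hα j] : ∀ j ∈ Finset.univ, 0 ≤ -α j)).1
        heq.symm j (Finset.mem_univ j)
      linarith
    have h1 : F v0 = 0 := by rw [hFdec]; simp [hzero]
    have h2 : F (fun _ => c) = 0 := by rw [hFdec]; simp [hzero]
    have h3 := hFC v0 hv0
    have h4 := hFQ _ hc1Q
    rw [h1] at h3; rw [h2] at h4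
    linarith
  refine ⟨fun j => -α j / β, fun j => div_nonneg (by linarith [hα j]) hβ0, ?_, ?_⟩
  · rw [← Finset.sum_div, ← hβ_def]
    exact div_self (ne_of_gt hβpos)
  · intro v hv
    have h1 : F v < u := hFC v hv
    have h2 : t < F (fun _ => c) := hFQ _ hc1Q
    have h3 : ∑ j, (-α j / β) * v j = (-F v) / β := by
      rw [hFdec v, ← Finset.sum_neg_distrib, Finset.sum_div]
      refine Finset.sum_congr rfl fun j _ => ?_
      rw [div_mul_eq_mul_div]
      congr 1
      ring
    rw [h3, le_div_iff₀ hβpos]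
    rw [hFc1] at h2
    nlinarith


set_option maxHeartbeats 2000000 in
lemma hard_direction {M0 M1 : Set (Measure Ω)}
    (hprob : ∀ μ ∈ M0 ∪ M1, IsProbabilityMeasure μ) (hdom : Dominated (M0 ∪ M1)) :
    (⨅ (φ : Ω → ℝ) (_ : IsTest φ),
        ⨆ (μ0 : Measure Ω) (_ : μ0 ∈ M0) (μ1 : Measure Ω) (_ : μ1 ∈ M1),
          ((testRisk μ0 μ1 φ : ℝ) : EReal)) ≤
      ⨆ (ν0 : Measure Ω) (_ : ν0 ∈ convComb M0) (ν1 : Measure Ω) (_ : ν1 ∈ convComb M1),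
        ⨅ (φ : Ω → ℝ) (_ : IsTest φ), ((testRisk ν0 ν1 φ : ℝ) : EReal) := by
  classical
  by_contra hlt
  push_neg at hlt
  obtain ⟨c, hc1, hc2⟩ := EReal.exists_between_coe_real hlt
  obtain ⟨ν₀, hν₀sf, hν₀⟩ := hdom
  haveI := hν₀sf
  obtain ⟨ν, hνfin, hν₀ν, -⟩ := MeasureTheory.exists_isFiniteMeasure_absolutelyContinuous ν₀
  haveI := hνfin
  have hac : ∀ μ ∈ M0 ∪ M1, μ ≪ ν := fun μ hμ => (hν₀ μ hμ).trans hν₀ν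
  -- densities
  have dint : ∀ (μ : Measure Ω), μ ∈ M0 ∪ M1 →
      Integrable (fun ω => (μ.rnDeriv ν ω).toReal) ν := by
    intro μ hμ
    haveI := hprob μ hμ
    exact Measure.integrable_toReal_rnDeriv
  -- pairs
  set P : Type _ := {p : Measure Ω × Measure Ω // p.1 ∈ M0 ∧ p.2 ∈ M1} with hP
  set d0 : P → II ν := fun p => ⟨fun ω => (p.1.1.rnDeriv ν ω).toReal, dint _ (Or.inl p.2.1)⟩
    with hd0
  set d1 : P → II ν := fun p => ⟨fun ω => (p.1.2.rnDeriv ν ω).toReal, dint _ (Or.inr p.2.2)⟩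
    with hd1
  have hkey : ∀ {φ : Ω → ℝ}, IsTest φ → ∀ (μ : Measure Ω), μ ∈ M0 ∪ M1 →
      ∫ ω, φ ω * (μ.rnDeriv ν ω).toReal ∂ν = ∫ ω, φ ω ∂μ := by
    intro φ hφ μ hμ
    haveI := hprob μ hμ
    have h := MeasureTheory.integral_rnDeriv_smul (hac μ hμ) (f := φ)
    rw [← h]
    exact integral_congr_ae (Filter.Eventually.of_forall fun ω => by
      show φ ω * ((μ.rnDeriv ν) ω).toReal = ((μ.rnDeriv ν) ω).toReal • φ ω
      rw [smul_eq_mul, mul_comm])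
  have htr : ∀ {φ : Ω → ℝ}, IsTest φ → ∀ (μ0 μ1 : Measure Ω), μ1 ∈ M0 ∪ M1 →
      testRisk μ0 μ1 φ = (∫ ω, φ ω ∂μ0) + (1 - ∫ ω, φ ω ∂μ1) := by
    intro φ hφ μ0 μ1 hμ1
    haveI := hprob μ1 hμ1
    unfold testRisk
    congr 1
    rw [integral_sub (integrable_const 1) (hφ.integrable μ1), integral_const]
    simp
  set payoff : P → (II ν → ℝ) → ℝ := fun p x => x (d0 p) + (1 - x (d1 p)) with hpayoff
  have hpayoff_eq : ∀ (p : P) {φ : Ω → ℝ}, IsTest φ →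
      payoff p (Jmap ν φ) = testRisk p.1.1 p.1.2 φ := by
    intro p φ hφ
    rw [htr hφ p.1.1 p.1.2 (Or.inr p.2.2)]
    show Jmap ν φ (d0 p) + (1 - Jmap ν φ (d1 p)) = _
    have e0 : Jmap ν φ (d0 p) = ∫ ω, φ ω ∂p.1.1 := hkey hφ p.1.1 (Or.inl p.2.1)
    have e1 : Jmap ν φ (d1 p) = ∫ ω, φ ω ∂p.1.2 := hkey hφ p.1.2 (Or.inr p.2.2)
    rw [e0, e1]
  -- covering of the compact set of generalized tests
  have hKcomp := isCompact_closure_TT ν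
  set U : P → Set (II ν → ℝ) := fun p => {x | c < payoff p x} with hU
  have hUopen : ∀ p, IsOpen (U p) := fun p =>
    isOpen_lt continuous_const ((continuous_apply _).add (continuous_const.sub (continuous_apply _)))
  have hcover : closure (TT ν) ⊆ ⋃ p : P, U p := by
    intro x hx
    obtain ⟨φ, hφ, rfl⟩ := closure_TT_rep hx
    have h1 : (c : EReal) < ⨆ (μ0 : Measure Ω) (_ : μ0 ∈ M0) (μ1 : Measure Ω) (_ : μ1 ∈ M1),
        ((testRisk μ0 μ1 φ : ℝ) : EReal) :=
      lt_of_lt_of_le hc2 (iInf₂_le φ hφ)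
    rw [lt_iSup_iff] at h1; obtain ⟨μ0, h1⟩ := h1
    rw [lt_iSup_iff] at h1; obtain ⟨hμ0, h1⟩ := h1
    rw [lt_iSup_iff] at h1; obtain ⟨μ1, h1⟩ := h1
    rw [lt_iSup_iff] at h1; obtain ⟨hμ1, h1⟩ := h1
    have h2 : c < testRisk μ0 μ1 φ := EReal.coe_lt_coe_iff.1 h1
    refine Set.mem_iUnion.2 ⟨⟨(μ0, μ1), hμ0, hμ1⟩, ?_⟩
    show c < payoff ⟨(μ0, μ1), hμ0, hμ1⟩ (Jmap ν φ)
    rw [hpayoff_eq _ hφ]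
    exact h2
  obtain ⟨s, hs⟩ := hKcomp.elim_finite_subcover U hUopen hcover
  have hx₀ : Jmap ν (fun _ => (0:ℝ)) ∈ closure (TT ν) := subset_closure (mem_TT isTest_zero)
  haveI hsne : Nonempty ↥s := by
    obtain ⟨p, hps, -⟩ := Set.mem_iUnion₂.1 (hs hx₀)
    exact ⟨⟨p, hps⟩⟩
  -- image in finite dimensions
  set g : (II ν → ℝ) → (↥s → ℝ) := fun x j => payoff j.1 x with hg
  have hgcont : Continuous g := continuous_pi fun j =>
    (continuous_apply _).add (continuous_const.sub (continuous_apply _))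
  set C : Set (↥s → ℝ) := g '' closure (TT ν) with hC
  have hCcomp : IsCompact C := hKcomp.image hgcont
  have hKconv : Convex ℝ (closure (TT ν)) := (convex_TT ν).closure
  have hCconv : Convex ℝ C := by
    rintro _ ⟨x, hx, rfl⟩ _ ⟨y, hy, rfl⟩ a b ha hb hab
    refine ⟨a • x + b • y, hKconv hx hy ha hb hab, ?_⟩
    funext j
    show payoff j.1 (a • x + b • y) = a * payoff j.1 x + b * payoff j.1 y
    simp only [hpayoff, Pi.add_apply, Pi.smul_apply, smul_eq_mul]
    linear_combination -hab
  have hCne : C.Nonempty := ⟨g (Jmap ν fun _ => 0), Set.mem_image_of_mem g hx₀⟩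
  have hCprop : ∀ v ∈ C, ∃ j, c < v j := by
    rintro _ ⟨x, hx, rfl⟩
    obtain ⟨p, hps, hpU⟩ := Set.mem_iUnion₂.1 (hs hx)
    exact ⟨⟨p, hps⟩, hpU⟩
  obtain ⟨W, hW0, hWs, hWle⟩ := simplex_separation hCconv hCcomp hCne hCprop
  -- build the mixtures
  set m := Fintype.card ↥s with hm
  set eqv : Fin m → ↥s := ⇑(Fintype.equivFin ↥s).symm with heqv
  set w : Fin m → ℝ≥0∞ := fun i => ENNReal.ofReal (W (eqv i)) with hw
  set κ : Fin m → Measure Ω := fun i => (eqv i).1.1.1 with hκ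
  set τ : Fin m → Measure Ω := fun i => (eqv i).1.1.2 with hτ
  have hκM0 : ∀ i, κ i ∈ M0 := fun i => (eqv i).1.2.1
  have hτM1 : ∀ i, τ i ∈ M1 := fun i => (eqv i).1.2.2
  haveI hκf : ∀ i, IsFiniteMeasure (κ i) := fun i =>
    haveI := hprob _ (Or.inl (hκM0 i)); inferInstance
  haveI hτf : ∀ i, IsFiniteMeasure (τ i) := fun i =>
    haveI := hprob _ (Or.inr (hτM1 i)); inferInstance
  have hwsum : ∑ i, w i = 1 := by
    rw [hw, ← ENNReal.ofReal_sum_of_nonneg (fun i _ => hW0 _)]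
    rw [show ∑ i, W (eqv i) = ∑ j, W j from
      Fintype.sum_equiv (Fintype.equivFin ↥s).symm _ _ (fun i => rfl)]
    rw [hWs, ENNReal.ofReal_one]
  have hν0mem : (∑ i, w i • κ i) ∈ convComb M0 := ⟨m, w, κ, hwsum, hκM0, rfl⟩
  have hν1mem : (∑ i, w i • τ i) ∈ convComb M1 := ⟨m, w, τ, hwsum, hτM1, rfl⟩
  have hfinal : ∀ φ : Ω → ℝ, IsTest φ → c ≤ testRisk (∑ i, w i • κ i) (∑ i, w i • τ i) φ := by
    intro φ hφ
    rw [testRisk_mixture hwsum κ τ hφ]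
    have hwt : ∀ i, (w i).toReal = W (eqv i) := fun i => ENNReal.toReal_ofReal (hW0 _)
    have hsum : ∑ i, (w i).toReal * testRisk (κ i) (τ i) φ
        = ∑ j : ↥s, W j * (g (Jmap ν φ) j) := by
      refine Fintype.sum_equiv (Fintype.equivFin ↥s).symm _ _ fun i => ?_
      rw [hwt i]
      congr 1
      exact (hpayoff_eq (eqv i).1 hφ).symm
    rw [hsum]
    exact hWle _ (Set.mem_image_of_mem g (subset_closure (mem_TT hφ)))
  have hfin2 : (c : EReal) ≤
      ⨆ (ν0 : Measure Ω) (_ : ν0 ∈ convComb M0) (ν1 : Measure Ω) (_ : ν1 ∈ convComb M1),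
        ⨅ (φ : Ω → ℝ) (_ : IsTest φ), ((testRisk ν0 ν1 φ : ℝ) : EReal) := by
    refine le_trans ?_ (le_iSup_of_le (∑ i, w i • κ i) (le_iSup_of_le hν0mem
      (le_iSup_of_le (∑ i, w i • τ i) (le_iSup_of_le hν1mem le_rfl))))
    exact le_iInf fun φ => le_iInf fun hφ => EReal.coe_le_coe_iff.2 (hfinal φ hφ)
  exact absurd hc1 (not_lt.2 hfin2)

end Statement1Aux

/-- Kraft–Le Cam minimax testing identity.
For sets `M0`, `M1` of probability measures whose union is dominated by a σ-finite measure,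
the minimax testing risk `inf_φ sup_{μ0 ∈ M0, μ1 ∈ M1} (∫ φ dμ0 + ∫ (1-φ) dμ1)` equals
`sup_{ν0 ∈ conv(M0), ν1 ∈ conv(M1)} inf_φ (∫ φ dν0 + ∫ (1-φ) dν1)`, i.e. it equals the
testing affinity `π(conv(M0), conv(M1))`. -/
theorem statement1 {Ω : Type*} [MeasurableSpace Ω] (M0 M1 : Set (Measure Ω))
    (hprob : ∀ μ ∈ M0 ∪ M1, IsProbabilityMeasure μ) (hdom : Dominated (M0 ∪ M1)) :
    (⨅ (φ : Ω → ℝ) (_ : IsTest φ),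
        ⨆ (μ0 : Measure Ω) (_ : μ0 ∈ M0) (μ1 : Measure Ω) (_ : μ1 ∈ M1),
          ((testRisk μ0 μ1 φ : ℝ) : EReal)) =
      ⨆ (ν0 : Measure Ω) (_ : ν0 ∈ convComb M0) (ν1 : Measure Ω) (_ : ν1 ∈ convComb M1),
        ⨅ (φ : Ω → ℝ) (_ : IsTest φ), ((testRisk ν0 ν1 φ : ℝ) : EReal) := by
  refine le_antisymm (hard_direction hprob hdom) ?_
  refine iSup₂_le fun ν0 hν0 => iSup₂_le fun ν1 hν1 => le_iInf₂ fun φ hφ => ?_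
  exact (iInf₂_le φ hφ).trans (testRisk_conv_le_sup hprob hν0 hν1 hφ)

end PrivacyPaper
end

section
/- Fix n ∈ ℕ, η ∈ (0,1) and a channel Q from X^n to Z^n. Define g_TV(Q,η) = inf{ d_TV(P0,P1) : π(Q P0^⊗n, Q P1^⊗n) ≤ η, P0, P1 ∈ P } and g_H(Q,η) = inf{ d_H(P0,P1) : π(Q P0^⊗n, Q P1^⊗n) ≤ η, P0, P1 ∈ P }, with inf ∅ = +∞. Then ω_TV( g_TV(Q,η)^− ) ≤ Δ_2^{(n)}(Q,η) and ω_H( g_H(Q,η)^− ) ≤ Δ_2^{(n)}(Q,η), where ω(x^−) = lim_{ε↑x} ω(ε). -/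
open MeasureTheory ProbabilityTheory ENNReal

namespace PrivacyPaper

variable {X Z Ω : Type*} [MeasurableSpace X] [MeasurableSpace Z] [MeasurableSpace Ω]

lemma testRisk_nonneg (μ0 μ1 : Measure Ω) (φ : Ω → ℝ) (hφ : IsTest φ) :
    0 ≤ testRisk μ0 μ1 φ := by
  refine add_nonneg (integral_nonneg fun ω => (hφ.2 ω).1)
    (integral_nonneg fun ω => sub_nonneg.2 (hφ.2 ω).2)

lemma pairAffinity_nonneg (μ0 μ1 : Measure Ω) : 0 ≤ pairAffinity μ0 μ1 :=
  Real.sInf_nonneg fun r ⟨φ, hφ, hr⟩ => hr ▸ testRisk_nonneg μ0 μ1 φ hφ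

lemma pairAffinity_le_one (μ0 μ1 : Measure Ω) [IsProbabilityMeasure μ1] :
    pairAffinity μ0 μ1 ≤ 1 := by
  have hmem : (1 : ℝ) ∈ {r : ℝ | ∃ φ : Ω → ℝ, IsTest φ ∧ r = testRisk μ0 μ1 φ} := by
    refine ⟨fun _ => 0, ⟨measurable_const, fun _ => ⟨le_rfl, zero_le_one⟩⟩, ?_⟩
    simp [testRisk]
  exact csInf_le ⟨0, fun r ⟨φ, hφ, hr⟩ => hr ▸ testRisk_nonneg μ0 μ1 φ hφ⟩ hmem

lemma pairAffinity_comm (μ0 μ1 : Measure Ω) : pairAffinity μ0 μ1 = pairAffinity μ1 μ0 := by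
  have key : ∀ ν0 ν1 : Measure Ω,
      {r : ℝ | ∃ φ : Ω → ℝ, IsTest φ ∧ r = testRisk ν0 ν1 φ} ⊆
      {r : ℝ | ∃ φ : Ω → ℝ, IsTest φ ∧ r = testRisk ν1 ν0 φ} := by
    rintro ν0 ν1 r ⟨φ, ⟨hms, hb⟩, rfl⟩
    refine ⟨fun ω => 1 - φ ω, ⟨measurable_const.sub hms,
      fun ω => ⟨sub_nonneg.2 (hb ω).2, by simp only []; linarith [(hb ω).1]⟩⟩, ?_⟩
    simp only [testRisk, _root_.sub_sub_cancel]
    exact add_comm _ _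
  unfold pairAffinity
  exact congrArg sInf (le_antisymm (key μ0 μ1) (key μ1 μ0))

lemma privProd_prob {X Z : Type*} [MeasurableSpace X] [MeasurableSpace Z] (n : ℕ)
    (Q : Kernel (Fin n → X) (Fin n → Z)) [IsMarkovKernel Q] (μ : Measure X)
    [IsProbabilityMeasure μ] : IsProbabilityMeasure (privProd n (fun x => Q x) μ) := by
  constructor
  rw [privProd, Measure.bind_apply MeasurableSet.univ Q.measurable.aemeasurable]
  simp

lemma aux_key {X Zn : Type*} [MeasurableSpace X] [MeasurableSpace Zn]
    (d : Measure X → Measure X → ℝ) (QPn : Measure X → Measure Zn)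
    (P : Set (Measure X)) (θ : Measure X → ℝ) (η : ℝ)
    (hprob : ∀ μ ∈ P, IsProbabilityMeasure (QPn μ)) :
    leftLimE (modulus d P θ) (gDist d QPn P η) ≤ Delta2 QPn P θ η := by
  refine iSup_le fun y => iSup_le fun hy => iSup_le fun hlt => ?_
  refine iSup_le fun P0 => iSup_le fun hP0 => iSup_le fun P1 => iSup_le fun hP1 =>
    iSup_le fun hd => ?_
  -- the pair cannot be testable at level η
  have hπ : η < pairAffinity (QPn P0) (QPn P1) := by
    by_contra h
    push_neg at h
    have hle : gDist d QPn P η ≤ ENNReal.ofReal (d P0 P1) :=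
      iInf_le_of_le P0 (iInf_le_of_le hP0 (iInf_le_of_le P1 (iInf_le_of_le hP1
        (iInf_le_of_le h le_rfl))))
    exact lt_irrefl _ (lt_of_le_of_lt (hle.trans (ENNReal.ofReal_le_ofReal hd)) hlt)
  set Δ : ℝ := |θ P0 - θ P1| with hΔdef
  have hΔ0 : 0 ≤ Δ := abs_nonneg _
  set t : ℝ := min (θ P0) (θ P1) with htdef
  -- find the ordered pair
  obtain ⟨A, hA, hAt, B, hB, hBt, hAB⟩ : ∃ A, A ∈ P ∧ θ A ≤ t ∧ ∃ B, B ∈ P ∧ t + Δ ≤ θ B ∧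
      pairAffinity (QPn A) (QPn B) = pairAffinity (QPn P0) (QPn P1) := by
    rcases le_total (θ P0) (θ P1) with hc | hc
    · refine ⟨P0, hP0, le_min le_rfl hc, P1, hP1, ?_, rfl⟩
      have : t = θ P0 := min_eq_left hc
      have : Δ = θ P1 - θ P0 := by
        rw [hΔdef, abs_of_nonpos (by linarith)]; ring
      simp only [htdef, min_eq_left hc, this]; linarith
    · refine ⟨P1, hP1, le_min hc le_rfl, P0, hP0, ?_, pairAffinity_comm _ _⟩
      have : Δ = θ P0 - θ P1 := by
        rw [hΔdef, abs_of_nonneg (by linarith)]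
      simp only [htdef, min_eq_right hc, this]; linarith
  -- bound on pair affinities over the class
  have hbdd : ∀ (M0 M1 : Set (Measure X)),
      (∀ μ ∈ M1, μ ∈ P) → BddAbove {r : ℝ | ∃ μ0 ∈ QPn '' M0, ∃ μ1 ∈ QPn '' M1,
        r = pairAffinity μ0 μ1} := by
    intro M0 M1 hM1
    refine ⟨1, ?_⟩
    rintro r ⟨μ0, _, μ1, ⟨ν1, hν1, rfl⟩, rfl⟩
    haveI := hprob ν1 (hM1 ν1 hν1)
    exact pairAffinity_le_one _ _
  have hsetle : ∀ (Δ' t' : ℝ),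
      setAffinity (QPn '' {μ | μ ∈ P ∧ θ μ ≤ t'}) (QPn '' {μ | μ ∈ P ∧ t' + Δ' ≤ θ μ}) ≤ 1 := by
    intro Δ' t'
    refine Real.sSup_le ?_ zero_le_one
    rintro r ⟨μ0, _, μ1, ⟨ν1, hν1, rfl⟩, rfl⟩
    haveI := hprob ν1 hν1.1
    exact pairAffinity_le_one _ _
  have heta : η < eta2 QPn P θ Δ := by
    have hmem : pairAffinity (QPn A) (QPn B) ∈
        {r : ℝ | ∃ μ0 ∈ QPn '' {μ | μ ∈ P ∧ θ μ ≤ t},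
          ∃ μ1 ∈ QPn '' {μ | μ ∈ P ∧ t + Δ ≤ θ μ}, r = pairAffinity μ0 μ1} :=
      ⟨QPn A, ⟨A, ⟨hA, hAt⟩, rfl⟩, QPn B, ⟨B, ⟨hB, hBt⟩, rfl⟩, rfl⟩
    have h1 : η < setAffinity (QPn '' {μ | μ ∈ P ∧ θ μ ≤ t})
        (QPn '' {μ | μ ∈ P ∧ t + Δ ≤ θ μ}) := by
      refine lt_of_lt_of_le (hAB ▸ hπ) (le_csSup ?_ hmem)
      exact hbdd _ _ fun μ hμ => hμ.1
    refine lt_of_lt_of_le h1 (le_ciSup (f := fun t' => setAffinity (QPn '' {μ | μ ∈ P ∧ θ μ ≤ t'})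
      (QPn '' {μ | μ ∈ P ∧ t' + Δ ≤ θ μ})) ⟨1, ?_⟩ t)
    rintro r ⟨t', rfl⟩
    exact hsetle Δ t'
  exact le_iSup_of_le Δ (le_iSup_of_le hΔ0 (le_iSup_of_le heta le_rfl))

/-- from pairwise testing bounds to `Δ_2`.
For `η ∈ (0,1)` and a channel `Q` from `X^n` to `Z^n`, with
`g_TV(Q,η) = inf {d_TV(P0,P1) : π(Q P0^{⊗n}, Q P1^{⊗n}) ≤ η}` and `g_H` defined analogously
with the Hellinger distance (and `inf ∅ = +∞`), one has
`ω_TV(g_TV(Q,η)⁻) ≤ Δ_2^{(n)}(Q,η)` and `ω_H(g_H(Q,η)⁻) ≤ Δ_2^{(n)}(Q,η)`. -/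
theorem statement3 {X Z : Type*} [MeasurableSpace X] [MeasurableSpace Z]
    (n : ℕ) (hn : 0 < n) (P : Set (Measure X)) (hP : ∀ μ ∈ P, IsProbabilityMeasure μ)
    (θ : Measure X → ℝ) (η : ℝ) (hη0 : 0 < η) (hη1 : η < 1)
    (Q : Kernel (Fin n → X) (Fin n → Z)) (hQ : IsMarkovKernel Q) :
    leftLimE (omegaTV P θ) (gDist dTV (privProd n fun x => Q x) P η)
        ≤ Delta2 (privProd n fun x => Q x) P θ η ∧
      leftLimE (omegaH P θ) (gDist dH (privProd n fun x => Q x) P η)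
        ≤ Delta2 (privProd n fun x => Q x) P θ η := by
  have hprob : ∀ μ ∈ P, IsProbabilityMeasure (privProd n (fun x => Q x) μ) := fun μ hμ => by
    haveI := hP μ hμ
    exact privProd_prob n Q μ
  exact ⟨aux_key dTV _ P θ η hprob, aux_key dH _ P θ η hprob⟩

end PrivacyPaper
end

section
/- Let α ∈ (0,∞). If P is convex and dominated by a σ-finite measure and θ : P → ℝ is linear, then for every ε > 0, the infimum over bounded measurable ℓ : X → ℝ with 0 < ‖ℓ‖∞ ≤ 1 of ω_H^{(Q1^{(α,ℓ)})}(ε) is at most ω_TV( (ε·(e^α+1)/(e^α−1))^+ ), where ω_TV(x^+) = lim_{y↓x} ω_TV(y). -/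
open MeasureTheory ProbabilityTheory ENNReal

namespace PrivacyPaper

variable {X Z Ω : Type*} [MeasurableSpace X] [MeasurableSpace Z] [MeasurableSpace Ω]

open scoped Classical

section TwoPoint

lemma two_point_apply {a b : ℝ} (c₁ c₂ : ℝ≥0∞) {S : Set ℝ} (hS : MeasurableSet S) :
    (c₁ • Measure.dirac a + c₂ • Measure.dirac b) S
      = (if a ∈ S then c₁ else 0) + (if b ∈ S then c₂ else 0) := by
  simp [Measure.dirac_apply' _ hS, Set.indicator_apply]

lemma withDensity_two_point {a b : ℝ} (c₁ c₂ : ℝ≥0∞) {h : ℝ → ℝ≥0∞} (hh : Measurable h) :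
    (c₁ • Measure.dirac a + c₂ • Measure.dirac b).withDensity h
      = (c₁ * h a) • Measure.dirac a + (c₂ * h b) • Measure.dirac b := by
  ext S hS
  rw [withDensity_apply _ hS, Measure.restrict_add, Measure.restrict_smul, Measure.restrict_smul,
    lintegral_add_measure, lintegral_smul_measure, lintegral_smul_measure,
    setLIntegral_dirac' hh hS, setLIntegral_dirac' hh hS, two_point_apply _ _ hS]
  by_cases ha : a ∈ S <;> by_cases hb : b ∈ S <;> simp [ha, hb, mul_comm]

lemma isFiniteMeasure_two_point {a b : ℝ} (c₁ c₂ : ℝ≥0∞) (h₁ : c₁ ≠ ∞) (h₂ : c₂ ≠ ∞) :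
    IsFiniteMeasure (c₁ • Measure.dirac a + c₂ • Measure.dirac b) := by
  constructor
  rw [two_point_apply _ _ MeasurableSet.univ]
  simp [lt_top_iff_ne_top, h₁, h₂]

lemma integral_two_point {a b : ℝ} (c₁ c₂ : ℝ≥0∞) (h₁ : c₁ ≠ ∞) (h₂ : c₂ ≠ ∞)
    {f : ℝ → ℝ} (hf : Measurable f) :
    ∫ x, f x ∂(c₁ • Measure.dirac a + c₂ • Measure.dirac b)
      = c₁.toReal * f a + c₂.toReal * f b := by
  have hint : ∀ (c : ℝ≥0∞) (x : ℝ), c ≠ ∞ → Integrable f (c • Measure.dirac x) := by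
    intro c x hc
    refine ⟨hf.aestronglyMeasurable, ?_⟩
    rw [HasFiniteIntegral, lintegral_smul_measure, lintegral_dirac' _ (by measurability)]
    exact ENNReal.mul_lt_top hc.lt_top (by simp)
  rw [integral_add_measure (hint _ _ h₁) (hint _ _ h₂), integral_smul_measure,
    integral_smul_measure, integral_dirac' _ _ hf.stronglyMeasurable,
    integral_dirac' _ _ hf.stronglyMeasurable]
  simp [smul_eq_mul]

end TwoPoint

lemma key_ineq (A B C D : ℝ) (h1 : A^2 + C^2 = 1) (h2 : B^2 + D^2 = 1) :
    (A^2 - B^2)^2 ≤ (A - B)^2 + (C - D)^2 := by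
  have hcs : (A*B + C*D) ≤ 1 := by
    nlinarith [sq_nonneg (A*D - C*B), sq_nonneg (A*B + C*D - 1), sq_nonneg (A*B+C*D)]
  have hL : 0 ≤ (A - B)^2 + (C - D)^2 := by positivity
  have hU : (A+B)^2 + (C+D)^2 ≤ 4 := by nlinarith
  have hCS2 : (2*(A^2 - B^2))^2 ≤ ((A-B)^2 + (C-D)^2) * ((A+B)^2 + (C+D)^2) := by
    nlinarith [sq_nonneg ((A-B)*(C+D) + (C-D)*(A+B))]
  nlinarith [mul_le_mul_of_nonneg_left hU hL]

lemma abs_sub_le_dH_two_point {a b : ℝ} (hab : a ≠ b) {p q : ℝ}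
    (hp0 : 0 ≤ p) (hp1 : p ≤ 1) (hq0 : 0 ≤ q) (hq1 : q ≤ 1) :
    |p - q| ≤ dH (ENNReal.ofReal p • Measure.dirac a + ENNReal.ofReal (1-p) • Measure.dirac b)
      (ENNReal.ofReal q • Measure.dirac a + ENNReal.ofReal (1-q) • Measure.dirac b) := by
  set μ0 := ENNReal.ofReal p • Measure.dirac a + ENNReal.ofReal (1-p) • Measure.dirac b with hμ0
  set μ1 := ENNReal.ofReal q • Measure.dirac a + ENNReal.ofReal (1-q) • Measure.dirac b with hμ1
  have hm : μ0 + μ1 = ENNReal.ofReal (p+q) • Measure.dirac a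
      + ENNReal.ofReal (2-p-q) • Measure.dirac b := by
    ext S hS
    rw [Measure.add_apply, two_point_apply _ _ hS, two_point_apply _ _ hS, two_point_apply _ _ hS,
      ENNReal.ofReal_add hp0 hq0]
    have : (2:ℝ)-p-q = (1-p) + (1-q) := by ring
    rw [this, ENNReal.ofReal_add (by linarith) (by linarith)]
    by_cases ha : a ∈ S <;> by_cases hb : b ∈ S <;> simp [ha, hb] <;> ring
  haveI hfin : IsFiniteMeasure (μ0 + μ1) := by
    rw [hm]; exact isFiniteMeasure_two_point _ _ (by simp) (by simp)
  set h0 : ℝ → ℝ≥0∞ := fun x => ENNReal.ofReal (if x = a then p/(p+q) else (1-p)/(2-p-q)) with hh0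
  set h1 : ℝ → ℝ≥0∞ := fun x => ENNReal.ofReal (if x = a then q/(p+q) else (1-q)/(2-p-q)) with hh1
  have hmeas0 : Measurable h0 :=
    ENNReal.measurable_ofReal.comp (Measurable.ite (measurableSet_eq) measurable_const measurable_const)
  have hmeas1 : Measurable h1 :=
    ENNReal.measurable_ofReal.comp (Measurable.ite (measurableSet_eq) measurable_const measurable_const)
  have coefa : ∀ u v : ℝ, 0 ≤ u → 0 ≤ v → u ≤ v → ENNReal.ofReal v * ENNReal.ofReal (u/v) = ENNReal.ofReal u := by
    intro u v hu hv huv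
    rcases eq_or_lt_of_le hv with hv0 | hv0
    · have : u = 0 := le_antisymm (huv.trans hv0.symm.le) hu
      simp [this, ← hv0]
    · rw [← ENNReal.ofReal_mul hv, mul_comm, div_mul_cancel₀ u hv0.ne']
  have hwd0 : μ0 = (μ0 + μ1).withDensity h0 := by
    rw [hm, withDensity_two_point _ _ hmeas0, hh0]
    simp only [eq_self_iff_true, if_true, if_neg hab.symm]
    rw [coefa p (p+q) hp0 (by linarith) (by linarith),
      coefa (1-p) (2-p-q) (by linarith) (by linarith) (by linarith)]
  have hwd1 : μ1 = (μ0 + μ1).withDensity h1 := by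
    rw [hm, withDensity_two_point _ _ hmeas1, hh1]
    simp only [eq_self_iff_true, if_true, if_neg hab.symm]
    rw [coefa q (p+q) hq0 (by linarith) (by linarith),
      coefa (1-q) (2-p-q) (by linarith) (by linarith) (by linarith)]
  have hrn0 : μ0.rnDeriv (μ0 + μ1) =ᵐ[μ0 + μ1] h0 := by
    have := Measure.rnDeriv_withDensity (μ0 + μ1) hmeas0
    rwa [← hwd0] at this
  have hrn1 : μ1.rnDeriv (μ0 + μ1) =ᵐ[μ0 + μ1] h1 := by
    have := Measure.rnDeriv_withDensity (μ0 + μ1) hmeas1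
    rwa [← hwd1] at this
  set Ga : ℝ := (Real.sqrt (p/(p+q)) - Real.sqrt (q/(p+q)))^2 with hGa
  set Gb : ℝ := (Real.sqrt ((1-p)/(2-p-q)) - Real.sqrt ((1-q)/(2-p-q)))^2 with hGb
  set F : ℝ → ℝ := fun x => if x = a then Ga else Gb with hF
  have hFmeas : Measurable F := Measurable.ite (measurableSet_eq) measurable_const measurable_const
  have hicongr : ∫ ω, (Real.sqrt ((μ0.rnDeriv (μ0 + μ1) ω).toReal) -
      Real.sqrt ((μ1.rnDeriv (μ0 + μ1) ω).toReal)) ^ 2 ∂(μ0 + μ1) = ∫ ω, F ω ∂(μ0 + μ1) := by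
    refine integral_congr_ae ?_
    filter_upwards [hrn0, hrn1] with x hx0 hx1
    rw [hx0, hx1, hh0, hh1]
    by_cases hxa : x = a
    · simp only [hF, if_pos hxa]
      rw [ENNReal.toReal_ofReal (div_nonneg hp0 (by linarith)),
        ENNReal.toReal_ofReal (div_nonneg hq0 (by linarith))]
    · simp only [hF, if_neg hxa]
      rw [ENNReal.toReal_ofReal (div_nonneg (by linarith) (by linarith)),
        ENNReal.toReal_ofReal (div_nonneg (by linarith) (by linarith))]
  have hival : ∫ ω, F ω ∂(μ0 + μ1) = (p+q) * Ga + (2-p-q) * Gb := by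
    rw [hm, integral_two_point _ _ (by simp) (by simp) hFmeas,
      ENNReal.toReal_ofReal (by linarith), ENNReal.toReal_ofReal (by linarith)]
    simp only [hF, if_pos rfl, if_neg hab.symm]
  have hmain : (p - q)^2 ≤ (p+q) * Ga + (2-p-q) * Gb := by
    by_cases hs : p + q = 0
    · have hp' : p = 0 := by linarith
      have hq' : q = 0 := by linarith
      have : (p-q)^2 = 0 := by rw [hp', hq']; ring
      rw [this]
      have : (0:ℝ) ≤ Ga := sq_nonneg _
      have : (0:ℝ) ≤ Gb := sq_nonneg _
      nlinarith [sq_nonneg (Real.sqrt (p/(p+q)) - Real.sqrt (q/(p+q)))]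
    by_cases ht : 2 - p - q = 0
    · have hp' : p = 1 := by linarith
      have hq' : q = 1 := by linarith
      have h0' : (p-q)^2 = 0 := by rw [hp', hq']; ring
      rw [h0']
      nlinarith [sq_nonneg (Real.sqrt (p/(p+q)) - Real.sqrt (q/(p+q))),
        sq_nonneg (Real.sqrt ((1-p)/(2-p-q)) - Real.sqrt ((1-q)/(2-p-q)))]
    have hs' : 0 < p + q := lt_of_le_of_ne (by linarith) (Ne.symm hs)
    have ht' : 0 < 2 - p - q := lt_of_le_of_ne (by linarith) (Ne.symm ht)
    have hsGa : (p+q) * Ga = (Real.sqrt p - Real.sqrt q)^2 := by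
      rw [hGa, Real.sqrt_div hp0, Real.sqrt_div hq0, div_sub_div_same, div_pow,
        Real.sq_sqrt hs'.le, mul_div_cancel₀ _ hs'.ne']
    have htGb : (2-p-q) * Gb = (Real.sqrt (1-p) - Real.sqrt (1-q))^2 := by
      rw [hGb, Real.sqrt_div (by linarith), Real.sqrt_div (by linarith), div_sub_div_same,
        div_pow, Real.sq_sqrt ht'.le, mul_div_cancel₀ _ ht'.ne']
    rw [hsGa, htGb]
    have h1 : (Real.sqrt p)^2 + (Real.sqrt (1-p))^2 = 1 := by
      rw [Real.sq_sqrt hp0, Real.sq_sqrt (by linarith)]; ring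
    have h2 : (Real.sqrt q)^2 + (Real.sqrt (1-q))^2 = 1 := by
      rw [Real.sq_sqrt hq0, Real.sq_sqrt (by linarith)]; ring
    have := key_ineq (Real.sqrt p) (Real.sqrt q) (Real.sqrt (1-p)) (Real.sqrt (1-q)) h1 h2
    rw [Real.sq_sqrt hp0, Real.sq_sqrt hq0] at this
    exact this
  rw [dH, hicongr, hival]
  calc |p - q| = Real.sqrt ((p-q)^2) := (Real.sqrt_sq_eq_abs _).symm
  _ ≤ _ := Real.sqrt_le_sqrt hmain

section Chan

open Real

variable {X : Type*} [MeasurableSpace X]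

lemma supNorm_bddAbove {ℓ : X → ℝ} (hb : ∀ x, |ℓ x| ≤ 1) :
    BddAbove (Set.range fun x => |ℓ x|) := ⟨1, by rintro _ ⟨x, rfl⟩; exact hb x⟩

lemma abs_le_supNorm {ℓ : X → ℝ} (hb : ∀ x, |ℓ x| ≤ 1) (x : X) : |ℓ x| ≤ supNorm ℓ :=
  le_ciSup (supNorm_bddAbove hb) x

lemma supNorm_le_one [Nonempty X] {ℓ : X → ℝ} (hb : ∀ x, |ℓ x| ≤ 1) : supNorm ℓ ≤ 1 :=
  ciSup_le fun x => hb x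

lemma supNorm_pos {ℓ : X → ℝ} (hb : ∀ x, |ℓ x| ≤ 1) (hnz : ∃ x, ℓ x ≠ 0) : 0 < supNorm ℓ := by
  obtain ⟨x, hx⟩ := hnz
  exact lt_of_lt_of_le (abs_pos.2 hx) (abs_le_supNorm hb x)

lemma one_lt_ratio {α : ℝ} (hα : 0 < α) : 1 < (Real.exp α + 1) / (Real.exp α - 1) := by
  have h1 : 1 < Real.exp α := Real.one_lt_exp_iff.mpr hα
  rw [lt_div_iff₀ (by linarith)]
  linarith

lemma measurable_binChannel {ℓ : X → ℝ} (hm : Measurable ℓ) (α : ℝ) :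
    Measurable (binChannel α ℓ) := by
  apply Measure.measurable_of_measurable_coe
  intro S hS
  simp only [binChannel, Measure.coe_add, Pi.add_apply, Measure.coe_smul, Pi.smul_apply,
    smul_eq_mul]
  have h1 : Measurable fun x => ENNReal.ofReal ((1 + ℓ x / (supNorm ℓ * ((Real.exp α + 1) / (Real.exp α - 1)))) / 2) :=
    ENNReal.measurable_ofReal.comp (((hm.div_const _).const_add 1).div_const 2)
  have h2 : Measurable fun x => ENNReal.ofReal ((1 - ℓ x / (supNorm ℓ * ((Real.exp α + 1) / (Real.exp α - 1)))) / 2) :=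
    ENNReal.measurable_ofReal.comp (((hm.div_const _).const_sub 1).div_const 2)
  exact (h1.mul_const _).add (h2.mul_const _)

lemma push_binChannel {ℓ : X → ℝ} (hm : Measurable ℓ) (hb : ∀ x, |ℓ x| ≤ 1)
    (hnz : ∃ x, ℓ x ≠ 0) {α : ℝ} (hα : 0 < α)
    (P : Measure X) [IsProbabilityMeasure P] :
    push (binChannel α ℓ) P
      = ENNReal.ofReal ((1 + (∫ x, ℓ x ∂P) / (supNorm ℓ * ((Real.exp α + 1) / (Real.exp α - 1)))) / 2)
          • Measure.dirac (supNorm ℓ * ((Real.exp α + 1) / (Real.exp α - 1)))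
        + ENNReal.ofReal ((1 - (∫ x, ℓ x ∂P) / (supNorm ℓ * ((Real.exp α + 1) / (Real.exp α - 1)))) / 2)
          • Measure.dirac (-(supNorm ℓ * ((Real.exp α + 1) / (Real.exp α - 1)))) := by
  have hz0 : 0 < supNorm ℓ * ((Real.exp α + 1) / (Real.exp α - 1)) :=
    mul_pos (supNorm_pos hb hnz) (lt_trans one_pos (one_lt_ratio hα))
  set z0 := supNorm ℓ * ((Real.exp α + 1) / (Real.exp α - 1)) with hz0def
  have hbz : ∀ x, |ℓ x / z0| ≤ 1 := by
    intro x
    rw [abs_div, abs_of_pos hz0, div_le_one hz0]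
    calc |ℓ x| ≤ supNorm ℓ := abs_le_supNorm hb x
    _ = supNorm ℓ * 1 := (mul_one _).symm
    _ ≤ z0 := by
        rw [hz0def]
        exact mul_le_mul_of_nonneg_left (le_of_lt (one_lt_ratio hα)) (supNorm_pos hb hnz).le
  have hint : Integrable ℓ P := by
    refine Integrable.mono' (integrable_const 1) hm.aestronglyMeasurable ?_
    exact Filter.Eventually.of_forall fun x => by simpa using hb x
  have hintd : Integrable (fun x => ℓ x / z0) P := hint.div_const z0
  have h1 : Measurable fun x => ENNReal.ofReal ((1 + ℓ x / z0) / 2) :=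
    ENNReal.measurable_ofReal.comp (((hm.div_const _).const_add 1).div_const 2)
  have h2 : Measurable fun x => ENNReal.ofReal ((1 - ℓ x / z0) / 2) :=
    ENNReal.measurable_ofReal.comp (((hm.div_const _).const_sub 1).div_const 2)
  ext S hS
  rw [push, Measure.bind_apply hS (measurable_binChannel hm α).aemeasurable]
  have hker : ∀ x, binChannel α ℓ x S
      = ENNReal.ofReal ((1 + ℓ x / z0) / 2) * (Measure.dirac z0 S)
        + ENNReal.ofReal ((1 - ℓ x / z0) / 2) * (Measure.dirac (-z0) S) := by
    intro x
    simp [binChannel, ← hz0def]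
  calc ∫⁻ x, binChannel α ℓ x S ∂P
      = ∫⁻ x, (ENNReal.ofReal ((1 + ℓ x / z0) / 2) * (Measure.dirac z0 S)
        + ENNReal.ofReal ((1 - ℓ x / z0) / 2) * (Measure.dirac (-z0) S)) ∂P :=
        lintegral_congr hker
    _ = (∫⁻ x, ENNReal.ofReal ((1 + ℓ x / z0) / 2) ∂P) * (Measure.dirac z0 S)
        + (∫⁻ x, ENNReal.ofReal ((1 - ℓ x / z0) / 2) ∂P) * (Measure.dirac (-z0) S) := by
        rw [lintegral_add_left (h1.mul_const _), lintegral_mul_const _ h1,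
          lintegral_mul_const _ h2]
    _ = ENNReal.ofReal ((1 + (∫ x, ℓ x ∂P) / z0) / 2) * (Measure.dirac z0 S)
        + ENNReal.ofReal ((1 - (∫ x, ℓ x ∂P) / z0) / 2) * (Measure.dirac (-z0) S) := by
        have hi1 : Integrable (fun x => (1 + ℓ x / z0) / 2) P :=
          ((integrable_const 1).add hintd).div_const 2
        have hi2 : Integrable (fun x => (1 - ℓ x / z0) / 2) P :=
          ((integrable_const 1).sub hintd).div_const 2
        rw [← ofReal_integral_eq_lintegral_ofReal hi1
            (Filter.Eventually.of_forall fun x => by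
              have := abs_le.1 (hbz x); simp only [Pi.zero_apply]; linarith [this.1, this.2]),
          ← ofReal_integral_eq_lintegral_ofReal hi2
            (Filter.Eventually.of_forall fun x => by
              have := abs_le.1 (hbz x); simp only [Pi.zero_apply]; linarith [this.1, this.2])]
        have e1 : ∫ x, (1 + ℓ x / z0) / 2 ∂P = (1 + (∫ x, ℓ x ∂P) / z0) / 2 := by
          rw [integral_div, integral_add (integrable_const 1) hintd, integral_const,
            probReal_univ, integral_div]
          simp
        have e2 : ∫ x, (1 - ℓ x / z0) / 2 ∂P = (1 - (∫ x, ℓ x ∂P) / z0) / 2 := by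
          rw [integral_div, integral_sub (integrable_const 1) hintd, integral_const,
            probReal_univ, integral_div]
          simp
        rw [e1, e2]
    _ = _ := by
        simp [Measure.coe_add, Measure.coe_smul, smul_eq_mul]

end Chan

section MeanGap

variable {X : Type*} [MeasurableSpace X]

lemma mean_gap_le_dH {ℓ : X → ℝ} (hm : Measurable ℓ) (hb : ∀ x, |ℓ x| ≤ 1)
    (hnz : ∃ x, ℓ x ≠ 0) {α : ℝ} (hα : 0 < α)
    (P0 P1 : Measure X) [IsProbabilityMeasure P0] [IsProbabilityMeasure P1] :
    |(∫ x, ℓ x ∂P0) - ∫ x, ℓ x ∂P1|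
      ≤ 2 * (supNorm ℓ * ((Real.exp α + 1) / (Real.exp α - 1)))
        * dH (push (binChannel α ℓ) P0) (push (binChannel α ℓ) P1) := by
  have hsn : 0 < supNorm ℓ := supNorm_pos hb hnz
  have hz0 : 0 < supNorm ℓ * ((Real.exp α + 1) / (Real.exp α - 1)) :=
    mul_pos hsn (lt_trans one_pos (one_lt_ratio hα))
  set z0 := supNorm ℓ * ((Real.exp α + 1) / (Real.exp α - 1)) with hz0def
  have hsnz0 : supNorm ℓ ≤ z0 := by
    rw [hz0def]
    nth_rewrite 1 [← mul_one (supNorm ℓ)]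
    exact mul_le_mul_of_nonneg_left (one_lt_ratio hα).le hsn.le
  have hmb : ∀ (P : Measure X) [IsProbabilityMeasure P], |∫ x, ℓ x ∂P| ≤ z0 := by
    intro P hP
    have h1 : ‖∫ x, ℓ x ∂P‖ ≤ supNorm ℓ * (P Set.univ).toReal :=
      norm_integral_le_of_norm_le_const
        (Filter.Eventually.of_forall fun x => by simpa using abs_le_supNorm hb x)
    rw [measure_univ] at h1
    simp only [Real.norm_eq_abs, ENNReal.toReal_one, mul_one] at h1
    exact h1.trans hsnz0
  set m0 := ∫ x, ℓ x ∂P0 with hm0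
  set m1 := ∫ x, ℓ x ∂P1 with hm1
  set p := (1 + m0 / z0) / 2 with hp
  set q := (1 + m1 / z0) / 2 with hq
  have hm0z : |m0 / z0| ≤ 1 := by
    rw [abs_div, abs_of_pos hz0, div_le_one hz0]; exact hmb P0
  have hm1z : |m1 / z0| ≤ 1 := by
    rw [abs_div, abs_of_pos hz0, div_le_one hz0]; exact hmb P1
  have hp0 : 0 ≤ p := by have := abs_le.1 hm0z; rw [hp]; linarith [this.1]
  have hp1 : p ≤ 1 := by have := abs_le.1 hm0z; rw [hp]; linarith [this.2]
  have hq0 : 0 ≤ q := by have := abs_le.1 hm1z; rw [hq]; linarith [this.1]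
  have hq1 : q ≤ 1 := by have := abs_le.1 hm1z; rw [hq]; linarith [this.2]
  have hab : z0 ≠ -z0 := by intro h; nlinarith [hz0]
  have hrw : ∀ m : ℝ, (1 - m / z0) / 2 = 1 - (1 + m / z0) / 2 := fun m => by ring
  have key := abs_sub_le_dH_two_point hab hp0 hp1 hq0 hq1
  have hpush0 : push (binChannel α ℓ) P0
      = ENNReal.ofReal p • Measure.dirac z0 + ENNReal.ofReal (1 - p) • Measure.dirac (-z0) := by
    rw [push_binChannel hm hb hnz hα P0, ← hm0, ← hz0def, hrw m0, hp]
  have hpush1 : push (binChannel α ℓ) P1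
      = ENNReal.ofReal q • Measure.dirac z0 + ENNReal.ofReal (1 - q) • Measure.dirac (-z0) := by
    rw [push_binChannel hm hb hnz hα P1, ← hm1, ← hz0def, hrw m1, hq]
  rw [hpush0, hpush1]
  have hdiff : p - q = (m0 - m1) / (2 * z0) := by
    rw [hp, hq, div_sub_div_same, add_sub_add_left_eq_sub, div_sub_div_same, div_div]
    ring_nf
  have h2 : 2 * z0 * |p - q| = |m0 - m1| := by
    rw [hdiff, abs_div, abs_of_pos (show (0:ℝ) < 2 * z0 by linarith)]
    field_simp
  calc |m0 - m1| = 2 * z0 * |p - q| := h2.symm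
  _ ≤ 2 * z0 * dH (ENNReal.ofReal p • Measure.dirac z0 + ENNReal.ofReal (1 - p) • Measure.dirac (-z0))
      (ENNReal.ofReal q • Measure.dirac z0 + ENNReal.ofReal (1 - q) • Measure.dirac (-z0)) :=
    mul_le_mul_of_nonneg_left key (by linarith)

end MeanGap

section DTV

variable {X : Type*} [MeasurableSpace X]

lemma dTV_le_half_L1 {ν : Measure X} [IsFiniteMeasure ν] {P0 P1 : Measure X}
    [IsProbabilityMeasure P0] [IsProbabilityMeasure P1] (h0 : P0 ≪ ν) (h1 : P1 ≪ ν) :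
    dTV P0 P1 ≤ (1/2) * ∫ x, |(P0.rnDeriv ν x).toReal - (P1.rnDeriv ν x).toReal| ∂ν := by
  haveI : Nonempty {A : Set X // MeasurableSet A} := ⟨⟨∅, MeasurableSet.empty⟩⟩
  refine ciSup_le ?_
  rintro ⟨A, hA⟩
  have hint0 : Integrable (fun x => (P0.rnDeriv ν x).toReal) ν :=
    Measure.integrable_toReal_rnDeriv
  have hint1 : Integrable (fun x => (P1.rnDeriv ν x).toReal) ν :=
    Measure.integrable_toReal_rnDeriv
  have hintg : Integrable (fun x => (P0.rnDeriv ν x).toReal - (P1.rnDeriv ν x).toReal) ν :=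
    hint0.sub hint1
  have hPA : ∀ (P : Measure X), P ≪ ν → IsProbabilityMeasure P →
      (P A).toReal = ∫ x in A, (P.rnDeriv ν x).toReal ∂ν := by
    intro P hPν hPp
    rw [Measure.setIntegral_toReal_rnDeriv hPν A]; rfl
  rw [hPA P0 h0 inferInstance, hPA P1 h1 inferInstance, ← integral_sub (hint0.restrict)
    (hint1.restrict)]
  have htot : ∫ x, ((P0.rnDeriv ν x).toReal - (P1.rnDeriv ν x).toReal) ∂ν = 0 := by
    rw [integral_sub hint0 hint1, Measure.integral_toReal_rnDeriv h0,
      Measure.integral_toReal_rnDeriv h1]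
    simp
  have hsplit := integral_add_compl hA hintg
  have hsplitabs := integral_add_compl hA hintg.abs
  have habs1 : |∫ x in A, ((P0.rnDeriv ν x).toReal - (P1.rnDeriv ν x).toReal) ∂ν|
      ≤ ∫ x in A, |(P0.rnDeriv ν x).toReal - (P1.rnDeriv ν x).toReal| ∂ν := by
    simpa [Real.norm_eq_abs] using norm_integral_le_integral_norm
      (μ := ν.restrict A) (f := fun x => (P0.rnDeriv ν x).toReal - (P1.rnDeriv ν x).toReal)
  have habs2 : |∫ x in Aᶜ, ((P0.rnDeriv ν x).toReal - (P1.rnDeriv ν x).toReal) ∂ν|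
      ≤ ∫ x in Aᶜ, |(P0.rnDeriv ν x).toReal - (P1.rnDeriv ν x).toReal| ∂ν := by
    simpa [Real.norm_eq_abs] using norm_integral_le_integral_norm
      (μ := ν.restrict Aᶜ) (f := fun x => (P0.rnDeriv ν x).toReal - (P1.rnDeriv ν x).toReal)
  have hopp : ∫ x in A, ((P0.rnDeriv ν x).toReal - (P1.rnDeriv ν x).toReal) ∂ν
      = - ∫ x in Aᶜ, ((P0.rnDeriv ν x).toReal - (P1.rnDeriv ν x).toReal) ∂ν := by
    rw [htot] at hsplit; linarith
  rw [abs_le]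
  constructor
  · rw [hopp]
    have := (abs_le.1 habs2).2
    have h2 := (abs_le.1 habs1).1
    nlinarith [abs_nonneg (∫ x in Aᶜ, ((P0.rnDeriv ν x).toReal - (P1.rnDeriv ν x).toReal) ∂ν),
      le_abs_self (∫ x in Aᶜ, ((P0.rnDeriv ν x).toReal - (P1.rnDeriv ν x).toReal) ∂ν),
      neg_abs_le (∫ x in Aᶜ, ((P0.rnDeriv ν x).toReal - (P1.rnDeriv ν x).toReal) ∂ν)]
  · have e1 := le_abs_self (∫ x in A, ((P0.rnDeriv ν x).toReal - (P1.rnDeriv ν x).toReal) ∂ν)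
    have e2 := neg_abs_le (∫ x in Aᶜ, ((P0.rnDeriv ν x).toReal - (P1.rnDeriv ν x).toReal) ∂ν)
    have e3 := (abs_le.1 habs1).2
    have e4 := (abs_le.1 habs2).2
    have e5 : |∫ x in A, ((P0.rnDeriv ν x).toReal - (P1.rnDeriv ν x).toReal) ∂ν|
        = |∫ x in Aᶜ, ((P0.rnDeriv ν x).toReal - (P1.rnDeriv ν x).toReal) ∂ν| := by
      rw [hopp, abs_neg]
    linarith [hsplitabs, (abs_le.1 habs1).1]

end DTV

section Duality

open scoped InnerProductSpace

variable {X : Type*} [MeasurableSpace X]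

set_option maxHeartbeats 2000000 in
lemma l1_dual_repr {ν : Measure X} [IsFiniteMeasure ν] (φ : Lp ℝ 1 ν →L[ℝ] ℝ)
    {K : ℝ} (hK : 0 ≤ K) (hφ : ∀ f : Lp ℝ 1 ν, |φ f| ≤ K * ‖f‖) :
    ∃ ℓ : X → ℝ, Measurable ℓ ∧ (∀ x, |ℓ x| ≤ K) ∧
      ∀ f : Lp ℝ 1 ν, φ f = ∫ x, ℓ x * (f : X → ℝ) x ∂ν := by
  haveI : Fact ((1:ℝ≥0∞) ≤ 1) := ⟨le_rfl⟩
  haveI : Fact ((1:ℝ≥0∞) ≤ 2) := ⟨by norm_num⟩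
  have h21 : ∀ f : Lp ℝ 2 ν, MemLp (f : X → ℝ) 1 ν := fun f =>
    (Lp.memLp f).mono_exponent (by norm_num)
  set C : ℝ := ((ν Set.univ) ^ ((1:ℝ)/2)).toReal with hC
  have hι_bound : ∀ f : Lp ℝ 2 ν, ‖((h21 f).toLp _ : Lp ℝ 1 ν)‖ ≤ C * ‖f‖ := by
    intro f
    rw [Lp.norm_toLp, Lp.norm_def, hC]
    rw [← ENNReal.toReal_mul]
    have hexp : (1 : ℝ) / (1:ℝ≥0∞).toReal - 1 / (2:ℝ≥0∞).toReal = 1/2 := by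
      norm_num
    have h := eLpNorm_le_eLpNorm_mul_rpow_measure_univ (p := 1) (q := 2)
      (by norm_num) (Lp.aestronglyMeasurable f)
    rw [hexp] at h
    have hfin : eLpNorm (f : X → ℝ) 2 ν * ν Set.univ ^ ((1:ℝ)/2) ≠ ∞ :=
      ENNReal.mul_ne_top (Lp.eLpNorm_ne_top f)
        (ENNReal.rpow_ne_top_of_nonneg (by norm_num) (measure_ne_top ν _))
    calc (eLpNorm (f : X → ℝ) 1 ν).toReal
        ≤ (eLpNorm (f : X → ℝ) 2 ν * ν Set.univ ^ ((1:ℝ)/2)).toReal :=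
          ENNReal.toReal_mono hfin h
      _ = (ν Set.univ ^ ((1:ℝ)/2) * eLpNorm (f : X → ℝ) 2 ν).toReal := by rw [mul_comm]
  set ιlin : Lp ℝ 2 ν →ₗ[ℝ] Lp ℝ 1 ν :=
    { toFun := fun f => (h21 f).toLp _
      map_add' := fun f g => by
        apply Lp.ext
        filter_upwards [MemLp.coeFn_toLp (h21 (f + g)), MemLp.coeFn_toLp (h21 f),
          MemLp.coeFn_toLp (h21 g), Lp.coeFn_add ((h21 f).toLp _) ((h21 g).toLp _),
          Lp.coeFn_add f g] with x e1 e2 e3 e4 e5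
        rw [e1, e4, e5]
        simp [e2, e3]
      map_smul' := fun c f => by
        apply Lp.ext
        filter_upwards [MemLp.coeFn_toLp (h21 (c • f)), MemLp.coeFn_toLp (h21 f),
          Lp.coeFn_smul c ((h21 f).toLp _), Lp.coeFn_smul c f] with x e1 e2 e3 e4
        rw [RingHom.id_apply, e1, e4, e3]
        simp [e2] } with hιlin
  set ι : Lp ℝ 2 ν →L[ℝ] Lp ℝ 1 ν := ιlin.mkContinuous C hι_bound with hι
  have hιcoe : ∀ f : Lp ℝ 2 ν, (ι f : X → ℝ) =ᵐ[ν] (f : X → ℝ) := fun f =>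
    MemLp.coeFn_toLp (h21 f)
  set ψ : Lp ℝ 2 ν →L[ℝ] ℝ := φ.comp ι with hψ
  set g : Lp ℝ 2 ν := (InnerProductSpace.toDual ℝ (Lp ℝ 2 ν)).symm ψ with hgdef
  have hg : ∀ f : Lp ℝ 2 ν, ∫ x, (g : X → ℝ) x * (f : X → ℝ) x ∂ν = ψ f := by
    intro f
    have h1 : ⟪g, f⟫_ℝ = ψ f := InnerProductSpace.toDual_symm_apply
    rw [← h1, L2.inner_def]
    congr 1
    ext x; simp [mul_comm]
  have hgint : Integrable (g : X → ℝ) ν := (h21 g).integrable le_rfl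
  have hgmeas : StronglyMeasurable (g : X → ℝ) := Lp.stronglyMeasurable g
  have hnorm_ind : ∀ {A : Set X} (hA : MeasurableSet A),
      ‖(indicatorConstLp 1 hA (measure_ne_top ν A) (1:ℝ))‖ = (ν A).toReal := by
    intro A hA
    rw [norm_indicatorConstLp one_ne_zero ENNReal.one_ne_top]
    norm_num
    rfl
  have hind : ∀ {A : Set X} (hA : MeasurableSet A),
      φ (indicatorConstLp 1 hA (measure_ne_top ν A) (1:ℝ)) = ∫ x in A, (g : X → ℝ) x ∂ν := by
    intro A hA
    have hιind : ι (indicatorConstLp 2 hA (measure_ne_top ν A) (1:ℝ))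
        = indicatorConstLp 1 hA (measure_ne_top ν A) (1:ℝ) := by
      apply Lp.ext
      filter_upwards [hιcoe (indicatorConstLp 2 hA (measure_ne_top ν A) (1:ℝ)),
        indicatorConstLp_coeFn (p := 2) (hs := hA) (hμs := measure_ne_top ν A) (c := (1:ℝ)),
        indicatorConstLp_coeFn (p := 1) (hs := hA) (hμs := measure_ne_top ν A) (c := (1:ℝ))]
        with x e1 e2 e3
      rw [e1, e2, e3]
    have h2 : φ (indicatorConstLp 1 hA (measure_ne_top ν A) (1:ℝ))
        = ψ (indicatorConstLp 2 hA (measure_ne_top ν A) (1:ℝ)) := by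
      rw [hψ, ContinuousLinearMap.comp_apply, hιind]
    rw [h2, ← hg]
    rw [← integral_indicator hA]
    refine integral_congr_ae ?_
    filter_upwards [indicatorConstLp_coeFn (p := 2) (hs := hA) (hμs := measure_ne_top ν A)
      (c := (1:ℝ))] with x e1
    rw [e1]
    by_cases hx : x ∈ A <;> simp [Set.indicator_apply, hx]
  have hgb : ∀ᵐ x ∂ν, |(g : X → ℝ) x| ≤ K := by
    have h1 : 0 ≤ᵐ[ν] fun x => K - (g : X → ℝ) x := by
      refine ae_nonneg_of_forall_setIntegral_nonneg ((integrable_const K).sub hgint) ?_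
      intro s hs _
      rw [integral_sub (integrable_const K).restrict hgint.restrict, setIntegral_const,
        ← hind hs]
      have hb := hφ (indicatorConstLp 1 hs (measure_ne_top ν s) (1:ℝ))
      rw [hnorm_ind hs] at hb
      have := (abs_le.1 hb).2
      simp only [smul_eq_mul, show ν.real s = (ν s).toReal from rfl]
      linarith [ENNReal.toReal_nonneg (a := ν s)]
    have h2 : 0 ≤ᵐ[ν] fun x => K + (g : X → ℝ) x := by
      refine ae_nonneg_of_forall_setIntegral_nonneg ((integrable_const K).add hgint) ?_
      intro s hs _
      rw [integral_add (integrable_const K).restrict hgint.restrict, setIntegral_const,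
        ← hind hs]
      have hb := hφ (indicatorConstLp 1 hs (measure_ne_top ν s) (1:ℝ))
      rw [hnorm_ind hs] at hb
      have := (abs_le.1 hb).1
      simp only [smul_eq_mul, show ν.real s = (ν s).toReal from rfl]
      linarith [ENNReal.toReal_nonneg (a := ν s)]
    filter_upwards [h1, h2] with x e1 e2
    simp only [Pi.zero_apply] at e1 e2
    rw [abs_le]
    constructor <;> linarith [e1, e2]
  set ℓ : X → ℝ := fun x => max (-K) (min K ((g : X → ℝ) x)) with hℓdef
  have hℓmeas : Measurable ℓ := measurable_const.max (measurable_const.min hgmeas.measurable)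
  have hℓb : ∀ x, |ℓ x| ≤ K := by
    intro x
    rw [abs_le]
    exact ⟨le_max_left _ _, max_le (by linarith) (min_le_left _ _)⟩
  have hℓg : ℓ =ᵐ[ν] (g : X → ℝ) := by
    filter_upwards [hgb] with x hx
    have h := abs_le.1 hx
    show max (-K) (min K ((g : X → ℝ) x)) = (g : X → ℝ) x
    rw [min_eq_right h.2, max_eq_right h.1]
  have hTint : ∀ f : Lp ℝ 1 ν, Integrable (fun x => ℓ x * (f : X → ℝ) x) ν := fun f =>
    (L1.integrable_coeFn f).bdd_mul hℓmeas.aestronglyMeasurable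
      (Filter.Eventually.of_forall fun x => by simpa using hℓb x)
  set Tlin : Lp ℝ 1 ν →ₗ[ℝ] ℝ :=
    { toFun := fun f => ∫ x, ℓ x * (f : X → ℝ) x ∂ν
      map_add' := fun f h => by
        show (∫ x, ℓ x * ((f + h : Lp ℝ 1 ν) : X → ℝ) x ∂ν)
          = (∫ x, ℓ x * (f : X → ℝ) x ∂ν) + ∫ x, ℓ x * (h : X → ℝ) x ∂ν
        have he : (fun x => ℓ x * ((f + h : Lp ℝ 1 ν) : X → ℝ) x)
            =ᵐ[ν] fun x => ℓ x * (f : X → ℝ) x + ℓ x * (h : X → ℝ) x := by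
          filter_upwards [Lp.coeFn_add f h] with x hx
          rw [hx]; simp [mul_add]
        rw [integral_congr_ae he, integral_add (hTint f) (hTint h)]
      map_smul' := fun c f => by
        show (∫ x, ℓ x * ((c • f : Lp ℝ 1 ν) : X → ℝ) x ∂ν)
          = (RingHom.id ℝ) c • ∫ x, ℓ x * (f : X → ℝ) x ∂ν
        have he : (fun x => ℓ x * ((c • f : Lp ℝ 1 ν) : X → ℝ) x)
            =ᵐ[ν] fun x => c * (ℓ x * (f : X → ℝ) x) := by
          filter_upwards [Lp.coeFn_smul c f] with x hx
          rw [hx]; simp; ring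
        rw [RingHom.id_apply, integral_congr_ae he, integral_const_mul]
        simp } with hTlin
  set T : Lp ℝ 1 ν →L[ℝ] ℝ := Tlin.mkContinuous K (fun f => by
    have h1 : ‖∫ x, ℓ x * (f : X → ℝ) x ∂ν‖ ≤ ∫ x, ‖ℓ x * (f : X → ℝ) x‖ ∂ν :=
      norm_integral_le_integral_norm _
    have h2 : ∫ x, ‖ℓ x * (f : X → ℝ) x‖ ∂ν ≤ ∫ x, K * ‖(f : X → ℝ) x‖ ∂ν := by
      refine integral_mono (hTint f).norm ((L1.integrable_coeFn f).norm.const_mul K) ?_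
      intro x
      simp only [norm_mul]
      exact mul_le_mul_of_nonneg_right (by simpa using hℓb x) (norm_nonneg _)
    rw [integral_const_mul] at h2
    rw [L1.norm_eq_integral_norm]
    calc ‖Tlin f‖ ≤ ∫ x, ‖ℓ x * (f : X → ℝ) x‖ ∂ν := h1
    _ ≤ K * ∫ x, ‖(f : X → ℝ) x‖ ∂ν := h2) with hT
  have hφT : ∀ f : Lp ℝ 1 ν, φ f = T f := by
    refine Lp.induction ENNReal.one_ne_top (fun f => φ f = T f) ?_ ?_ ?_
    · intro c s hs hμs
      rw [Lp.simpleFunc.coe_indicatorConst]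
      have hsmul : (indicatorConstLp 1 hs hμs.ne c : Lp ℝ 1 ν)
          = c • indicatorConstLp 1 hs hμs.ne (1:ℝ) := by
        apply Lp.ext
        filter_upwards [indicatorConstLp_coeFn (p := 1) (hs := hs) (hμs := hμs.ne) (c := c),
          Lp.coeFn_smul c (indicatorConstLp 1 hs hμs.ne (1:ℝ)),
          indicatorConstLp_coeFn (p := 1) (hs := hs) (hμs := hμs.ne) (c := (1:ℝ))]
          with x e1 e2 e3
        rw [e1, e2, Pi.smul_apply, e3]
        simp only [smul_eq_mul, Set.indicator_apply]
        split_ifs <;> simp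
      have hμsne : (indicatorConstLp 1 hs hμs.ne (1:ℝ) : Lp ℝ 1 ν)
          = indicatorConstLp 1 hs (measure_ne_top ν s) (1:ℝ) := by
        congr 1
      rw [hsmul, _root_.map_smul, _root_.map_smul, hμsne]
      congr 1
      have hTval : T (indicatorConstLp 1 hs (measure_ne_top ν s) (1:ℝ)) = ∫ x in s, ℓ x ∂ν := by
        have : T (indicatorConstLp 1 hs (measure_ne_top ν s) (1:ℝ))
            = ∫ x, ℓ x * ((indicatorConstLp 1 hs (measure_ne_top ν s) (1:ℝ) : Lp ℝ 1 ν) : X → ℝ) x ∂ν := rfl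
        rw [this, ← integral_indicator hs]
        refine integral_congr_ae ?_
        filter_upwards [indicatorConstLp_coeFn (p := 1) (hs := hs)
          (hμs := measure_ne_top ν s) (c := (1:ℝ))] with x e1
        rw [e1]
        by_cases hx : x ∈ s <;> simp [Set.indicator_apply, hx]
      rw [hind hs, hTval]
      refine setIntegral_congr_ae hs ?_
      filter_upwards [hℓg] with x hx _
      rw [hx]
    · intro f h hf hh _ h1 h2
      rw [_root_.map_add, _root_.map_add, h1, h2]
    · exact isClosed_eq φ.continuous T.continuous
  exact ⟨ℓ, hℓmeas, hℓb, fun f => by rw [hφT f]; rfl⟩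

end Duality

section Main

variable {X : Type*} [MeasurableSpace X]

lemma dH_comm (μ0 μ1 : Measure X) : dH μ0 μ1 = dH μ1 μ0 := by
  rw [dH, dH, add_comm μ1 μ0]
  congr 1
  refine integral_congr_ae (Filter.Eventually.of_forall fun ω => by ring)

lemma dens_mix {ν : Measure X} [IsFiniteMeasure ν] (P0 P1 : Measure X)
    [IsProbabilityMeasure P0] [IsProbabilityMeasure P1] {lam : ℝ} (h0 : 0 ≤ lam) (h1 : lam ≤ 1) :
    (fun x => ((mix lam P0 P1).rnDeriv ν x).toReal)
      =ᵐ[ν] fun x => lam * (P0.rnDeriv ν x).toReal + (1 - lam) * (P1.rnDeriv ν x).toReal := by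
  haveI i0 : IsFiniteMeasure (ENNReal.ofReal lam • P0) := by
    constructor
    rw [Measure.smul_apply, smul_eq_mul]
    exact ENNReal.mul_lt_top ENNReal.ofReal_lt_top (measure_lt_top _ _)
  haveI i1 : IsFiniteMeasure (ENNReal.ofReal (1 - lam) • P1) := by
    constructor
    rw [Measure.smul_apply, smul_eq_mul]
    exact ENNReal.mul_lt_top ENNReal.ofReal_lt_top (measure_lt_top _ _)
  have hadd := Measure.rnDeriv_add (ENNReal.ofReal lam • P0) (ENNReal.ofReal (1 - lam) • P1) ν
  have hs0 := Measure.rnDeriv_smul_left_of_ne_top P0 ν (r := ENNReal.ofReal lam)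
    ENNReal.ofReal_ne_top
  have hs1 := Measure.rnDeriv_smul_left_of_ne_top P1 ν (r := ENNReal.ofReal (1 - lam))
    ENNReal.ofReal_ne_top
  have hf0 := Measure.rnDeriv_lt_top P0 ν
  have hf1 := Measure.rnDeriv_lt_top P1 ν
  filter_upwards [hadd, hs0, hs1, hf0, hf1] with x e1 e2 e3 e4 e5
  rw [mix, e1]
  simp only [Pi.add_apply, e2, e3, Pi.smul_apply, smul_eq_mul]
  rw [ENNReal.toReal_add, ENNReal.toReal_mul, ENNReal.toReal_mul,
    ENNReal.toReal_ofReal h0, ENNReal.toReal_ofReal (by linarith)]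
  · exact ENNReal.mul_ne_top ENNReal.ofReal_ne_top e4.ne
  · exact ENNReal.mul_ne_top ENNReal.ofReal_ne_top e5.ne

end Main

set_option maxHeartbeats 2000000 in
/-- Theorem: optimal binary channels achieve the TV-modulus.
If `𝒫` is convex and dominated and `θ` is linear, then for every `ε > 0`, the infimum over
bounded measurable `ℓ : X → ℝ` with `0 < ‖ℓ‖_∞ ≤ 1` of the privatized Hellinger modulus
`ω_H^{(Q1^{(α,ℓ)})}(ε)` is at most `ω_TV((ε (e^α+1)/(e^α-1))⁺)`. -/
theorem statement7 {X : Type*} [MeasurableSpace X] [Nonempty X]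
    (α : ℝ) (hα : 0 < α)
    (P : Set (Measure X)) (hP : ∀ μ ∈ P, IsProbabilityMeasure μ)
    (hconv : ConvexMeasureSet P) (hdom : Dominated P)
    (θ : Measure X → ℝ) (hlin : LinearFunctional P θ) (ε : ℝ) (hε : 0 < ε) :
    (⨅ (ℓ : X → ℝ) (_ : Measurable ℓ) (_ : ∀ x, |ℓ x| ≤ 1) (_ : ∃ x, ℓ x ≠ 0),
        omegaHQ (binChannel α ℓ) P θ ε)
      ≤ rightLimE (omegaTV P θ) (ε * ((Real.exp α + 1) / (Real.exp α - 1))) := by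
  have hc1 : 1 < (Real.exp α + 1) / (Real.exp α - 1) := one_lt_ratio hα
  set c := (Real.exp α + 1) / (Real.exp α - 1) with hcdef
  have hc0 : 0 < c := lt_trans one_pos hc1
  rw [rightLimE]
  refine le_iInf fun y => le_iInf fun hy => ?_
  have hy0 : 0 < y := lt_trans (mul_pos hε hc0) hy
  by_cases htop : omegaTV P θ y = ⊤
  · exact htop ▸ le_top
  set r := (omegaTV P θ y).toReal with hrdef
  have hrE : omegaTV P θ y = ENNReal.ofReal r := (ENNReal.ofReal_toReal htop).symm
  have hr0 : 0 ≤ r := ENNReal.toReal_nonneg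
  have hbound : ∀ P0, P0 ∈ P → ∀ P1, P1 ∈ P → dTV P0 P1 ≤ y → |θ P0 - θ P1| ≤ r := by
    intro P0 h0 P1 h1 hd
    have hle : ENNReal.ofReal |θ P0 - θ P1| ≤ omegaTV P θ y :=
      le_iSup_of_le P0 (le_iSup_of_le h0 (le_iSup_of_le P1 (le_iSup_of_le h1
        (le_iSup_of_le hd le_rfl))))
    rw [hrE] at hle
    exact (ENNReal.ofReal_le_ofReal_iff hr0).1 hle
  have hgoal : ∀ ℓ : X → ℝ, Measurable ℓ → (∀ x, |ℓ x| ≤ 1) → (∃ x, ℓ x ≠ 0) →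
      (∀ P0, P0 ∈ P → ∀ P1, P1 ∈ P →
        dH (push (binChannel α ℓ) P0) (push (binChannel α ℓ) P1) ≤ ε → |θ P0 - θ P1| ≤ r) →
      (⨅ (ℓ : X → ℝ) (_ : Measurable ℓ) (_ : ∀ x, |ℓ x| ≤ 1) (_ : ∃ x, ℓ x ≠ 0),
        omegaHQ (binChannel α ℓ) P θ ε) ≤ omegaTV P θ y := by
    intro ℓ hm hb hnz hctrl
    refine le_trans (iInf_le_of_le ℓ (iInf_le_of_le hm (iInf_le_of_le hb
      (iInf_le_of_le hnz le_rfl)))) ?_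
    rw [hrE, omegaHQ, modulus]
    refine iSup_le fun P0 => iSup_le fun h0 => iSup_le fun P1 => iSup_le fun h1 =>
      iSup_le fun hd => ?_
    exact ENNReal.ofReal_le_ofReal (hctrl P0 h0 P1 h1 hd)
  by_cases hex : ∃ P0, P0 ∈ P ∧ ∃ P1, P1 ∈ P ∧ r < θ P0 - θ P1
  · obtain ⟨P0e, hP0e, P1e, hP1e, hgapE⟩ := hex
    obtain ⟨ν0, hν0sf, hν0ac⟩ := hdom
    haveI := hν0sf
    obtain ⟨ν, hνfin, hν0ν, -⟩ :=
      MeasureTheory.exists_isFiniteMeasure_absolutelyContinuous ν0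
    haveI := hνfin
    haveI : Fact ((1:ℝ≥0∞) ≤ 1) := ⟨le_rfl⟩
    have hac : ∀ μ ∈ P, μ ≪ ν := fun μ hμ => (hν0ac μ hμ).trans hν0ν
    have hdint : ∀ μ, μ ∈ P → Integrable (fun x => (μ.rnDeriv ν x).toReal) ν := by
      intro μ hμ
      haveI := hP μ hμ
      exact Measure.integrable_toReal_rnDeriv
    have hdmem : ∀ μ, μ ∈ P → MemLp (fun x => (μ.rnDeriv ν x).toReal) 1 ν := fun μ hμ =>
      memLp_one_iff_integrable.2 (hdint μ hμ)
    set D : Set (Lp ℝ 1 ν) := {f | ∃ Q0, Q0 ∈ P ∧ ∃ Q1, Q1 ∈ P ∧ r < θ Q0 - θ Q1 ∧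
      (f : X → ℝ) =ᵐ[ν]
        fun x => (Q0.rnDeriv ν x).toReal - (Q1.rnDeriv ν x).toReal} with hDdef
    have hmemD : ∀ Q0 (hQ0 : Q0 ∈ P) Q1 (hQ1 : Q1 ∈ P), r < θ Q0 - θ Q1 →
        (((hdmem Q0 hQ0).sub (hdmem Q1 hQ1)).toLp _) ∈ D := by
      intro Q0 hQ0 Q1 hQ1 hgap
      refine ⟨Q0, hQ0, Q1, hQ1, hgap, ?_⟩
      filter_upwards [MemLp.coeFn_toLp ((hdmem Q0 hQ0).sub (hdmem Q1 hQ1))] with x hx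
      exact hx
    have hnormD : ∀ f ∈ D, 2 * y < ‖f‖ := by
      rintro f ⟨Q0, hQ0, Q1, hQ1, hgap, heq⟩
      haveI := hP Q0 hQ0; haveI := hP Q1 hQ1
      have hdTV : y < dTV Q0 Q1 := by
        by_contra hcon
        push_neg at hcon
        have h1 := hbound Q0 hQ0 Q1 hQ1 hcon
        have h2 := le_abs_self (θ Q0 - θ Q1)
        linarith
      have hnorm : ‖f‖ = ∫ x, |(Q0.rnDeriv ν x).toReal - (Q1.rnDeriv ν x).toReal| ∂ν := by
        rw [L1.norm_eq_integral_norm]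
        refine integral_congr_ae ?_
        filter_upwards [heq] with x hx
        rw [hx, Real.norm_eq_abs]
      have hhalf := dTV_le_half_L1 (hac Q0 hQ0) (hac Q1 hQ1)
      rw [hnorm]; linarith
    have hDconv : Convex ℝ D := by
      rintro f ⟨Q0, hQ0, Q1, hQ1, hgap, heq⟩ f' ⟨Q0', hQ0', Q1', hQ1', hgap', heq'⟩ a b ha hb hab
      haveI := hP Q0 hQ0; haveI := hP Q1 hQ1
      haveI := hP Q0' hQ0'; haveI := hP Q1' hQ1'
      have hb1 : b = 1 - a := by linarith
      have ha1 : a ≤ 1 := by linarith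
      refine ⟨mix a Q0 Q0', hconv Q0 hQ0 Q0' hQ0' a ha ha1,
        mix a Q1 Q1', hconv Q1 hQ1 Q1' hQ1' a ha ha1, ?_, ?_⟩
      · rw [hlin Q0 hQ0 Q0' hQ0' a ha ha1, hlin Q1 hQ1 Q1' hQ1' a ha ha1]
        rcases eq_or_lt_of_le ha with ha0 | ha0
        · rw [← ha0]; simp; linarith
        · nlinarith
      · have hm0 := dens_mix (ν := ν) Q0 Q0' ha ha1
        have hm1 := dens_mix (ν := ν) Q1 Q1' ha ha1
        filter_upwards [Lp.coeFn_add (a • f) (b • f'), Lp.coeFn_smul a f, Lp.coeFn_smul b f',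
          heq, heq', hm0, hm1] with x e1 e2 e3 e4 e5 e6 e7
        rw [e1, Pi.add_apply, e2, e3, Pi.smul_apply, Pi.smul_apply, smul_eq_mul, smul_eq_mul,
          e4, e5, e6, e7, hb1]
        ring
    have hdisj : Disjoint (Metric.ball (0 : Lp ℝ 1 ν) (2 * y)) D := by
      rw [Set.disjoint_left]
      intro f hf hfD
      rw [Metric.mem_ball, dist_zero_right] at hf
      exact absurd hf (not_lt.2 (hnormD f hfD).le)
    obtain ⟨φ, u, hball, hsep⟩ := geometric_hahn_banach_open
      (convex_ball (0 : Lp ℝ 1 ν) (2 * y)) Metric.isOpen_ball hDconv hdisj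
    have hu0 : 0 < u := by
      have h0b := hball 0 (Metric.mem_ball_self (by linarith))
      rwa [map_zero] at h0b
    set K := u / (2 * y) with hKdef
    have hK0 : 0 < K := div_pos hu0 (by linarith)
    have hu2 : u = 2 * y * K := by
      rw [hKdef]; field_simp
    have hφb : ∀ f : Lp ℝ 1 ν, |φ f| ≤ K * ‖f‖ := by
      intro f
      rcases eq_or_ne f 0 with rfl | hf0
      · simp
      have hfn : 0 < ‖f‖ := norm_pos_iff.2 hf0
      by_contra hcon
      push_neg at hcon
      set s := (K * ‖f‖ + |φ f|) / 2 with hsdef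
      have hs1 : K * ‖f‖ < s := by rw [hsdef]; linarith
      have hs2 : s < |φ f| := by rw [hsdef]; linarith
      have hφf0 : 0 < |φ f| := lt_of_le_of_lt (by positivity) hcon
      have hs0 : 0 < s := lt_of_le_of_lt (by positivity) hs1
      set σ : ℝ := if 0 ≤ φ f then 1 else -1 with hσdef
      have hσφ : σ * φ f = |φ f| := by
        rw [hσdef]; split_ifs with h
        · rw [abs_of_nonneg h]; ring
        · rw [abs_of_neg (not_le.1 h)]; ring
      have hσ1 : |σ| = 1 := by rw [hσdef]; split_ifs <;> simp
      set t : ℝ := 2 * y * s / (|φ f| * ‖f‖) * σ with htdef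
      have hnorm_t : ‖t • f‖ = 2 * y * s / |φ f| := by
        rw [norm_smul, Real.norm_eq_abs, htdef, abs_mul, hσ1, mul_one, abs_div,
          abs_of_pos (show (0:ℝ) < 2 * y * s by positivity), abs_of_pos (mul_pos hφf0 hfn),
          div_mul_eq_mul_div, mul_div_mul_right _ _ hfn.ne']
      have hmem : t • f ∈ Metric.ball (0 : Lp ℝ 1 ν) (2 * y) := by
        rw [Metric.mem_ball, dist_zero_right, hnorm_t]
        rw [div_lt_iff₀ hφf0]
        nlinarith
      have hval : φ (t • f) = 2 * y * s / ‖f‖ := by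
        rw [_root_.map_smul, smul_eq_mul, htdef]
        rw [mul_comm (2 * y * s / (|φ f| * ‖f‖)) σ, mul_assoc, mul_comm σ, mul_assoc]
        rw [mul_comm (φ f) σ, hσφ]
        field_simp
      have hlt := hball (t • f) hmem
      rw [hval, hu2] at hlt
      rw [div_lt_iff₀ hfn] at hlt
      nlinarith
    obtain ⟨ℓ0, hℓ0meas, hℓ0b, hℓ0repr⟩ := l1_dual_repr φ hK0.le hφb
    set ℓ : X → ℝ := fun x => ℓ0 x / K with hℓdef
    have hℓmeas : Measurable ℓ := hℓ0meas.div_const K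
    have hℓb : ∀ x, |ℓ x| ≤ 1 := by
      intro x
      rw [hℓdef]
      rw [abs_div, abs_of_pos hK0, div_le_one hK0]
      exact hℓ0b x
    have hφfd : ∀ Q0 (hQ0 : Q0 ∈ P) Q1 (hQ1 : Q1 ∈ P),
        φ (((hdmem Q0 hQ0).sub (hdmem Q1 hQ1)).toLp _)
          = (∫ x, ℓ0 x ∂Q0) - ∫ x, ℓ0 x ∂Q1 := by
      intro Q0 hQ0 Q1 hQ1
      haveI := hP Q0 hQ0; haveI := hP Q1 hQ1
      rw [hℓ0repr]
      have hint0 : Integrable (fun x => ℓ0 x * (Q0.rnDeriv ν x).toReal) ν :=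
        (hdint Q0 hQ0).bdd_mul hℓ0meas.aestronglyMeasurable
          (Filter.Eventually.of_forall fun x => by simpa using hℓ0b x)
      have hint1 : Integrable (fun x => ℓ0 x * (Q1.rnDeriv ν x).toReal) ν :=
        (hdint Q1 hQ1).bdd_mul hℓ0meas.aestronglyMeasurable
          (Filter.Eventually.of_forall fun x => by simpa using hℓ0b x)
      have e1 : ∫ x, ℓ0 x * ((((hdmem Q0 hQ0).sub (hdmem Q1 hQ1)).toLp _ : Lp ℝ 1 ν) : X → ℝ) x ∂ν
          = ∫ x, (ℓ0 x * (Q0.rnDeriv ν x).toReal - ℓ0 x * (Q1.rnDeriv ν x).toReal) ∂ν := by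
        refine integral_congr_ae ?_
        filter_upwards [MemLp.coeFn_toLp ((hdmem Q0 hQ0).sub (hdmem Q1 hQ1))] with x hx
        rw [hx]
        simp only [Pi.sub_apply]
        ring
      rw [e1, integral_sub hint0 hint1]
      have e2 : ∫ x, ℓ0 x * (Q0.rnDeriv ν x).toReal ∂ν = ∫ x, ℓ0 x ∂Q0 := by
        rw [← integral_rnDeriv_smul (hac Q0 hQ0)]
        refine integral_congr_ae (Filter.Eventually.of_forall fun x => ?_)
        simp only [smul_eq_mul]
        ring
      have e3 : ∫ x, ℓ0 x * (Q1.rnDeriv ν x).toReal ∂ν = ∫ x, ℓ0 x ∂Q1 := by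
        rw [← integral_rnDeriv_smul (hac Q1 hQ1)]
        refine integral_congr_ae (Filter.Eventually.of_forall fun x => ?_)
        simp only [smul_eq_mul]
        ring
      rw [e2, e3]
    have hnz : ∃ x, ℓ x ≠ 0 := by
      by_contra hno
      push_neg at hno
      have hl00 : ∀ x, ℓ0 x = 0 := by
        intro x
        have hx := hno x
        rw [hℓdef] at hx
        simp only [_root_.div_eq_zero_iff] at hx
        rcases hx with h | h
        · exact h
        · exact absurd h hK0.ne'
      have hfd0 := hφfd P0e hP0e P1e hP1e
      have hz : (∫ x, ℓ0 x ∂P0e) - ∫ x, ℓ0 x ∂P1e = 0 := by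
        simp [hl00]
      have hge := hsep _ (hmemD P0e hP0e P1e hP1e hgapE)
      rw [hfd0, hz] at hge
      linarith
    have hkey : ∀ Q0, Q0 ∈ P → ∀ Q1, Q1 ∈ P → r < θ Q0 - θ Q1 →
        2 * y ≤ (∫ x, ℓ x ∂Q0) - ∫ x, ℓ x ∂Q1 := by
      intro Q0 hQ0 Q1 hQ1 hgap
      haveI := hP Q0 hQ0; haveI := hP Q1 hQ1
      have h1 := hsep _ (hmemD Q0 hQ0 Q1 hQ1 hgap)
      rw [hφfd Q0 hQ0 Q1 hQ1] at h1
      have h6 : ∫ x, ℓ0 x ∂Q0 = K * ∫ x, ℓ x ∂Q0 := by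
        rw [← integral_const_mul]
        refine integral_congr_ae (Filter.Eventually.of_forall fun x => ?_)
        rw [hℓdef]
        field_simp
      have h7 : ∫ x, ℓ0 x ∂Q1 = K * ∫ x, ℓ x ∂Q1 := by
        rw [← integral_const_mul]
        refine integral_congr_ae (Filter.Eventually.of_forall fun x => ?_)
        rw [hℓdef]
        field_simp
      rw [h6, h7, hu2] at h1
      nlinarith
    refine hgoal ℓ hℓmeas hℓb hnz ?_
    intro Q0 hQ0 Q1 hQ1 hdH
    haveI := hP Q0 hQ0; haveI := hP Q1 hQ1
    have hsn1 : supNorm ℓ ≤ 1 := supNorm_le_one hℓb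
    have hsn0 : 0 < supNorm ℓ := supNorm_pos hℓb hnz
    rw [abs_le]
    constructor
    · by_contra hcon
      push_neg at hcon
      have h2y := hkey Q1 hQ1 Q0 hQ0 (by linarith)
      have hmg := mean_gap_le_dH hℓmeas hℓb hnz hα Q1 Q0
      have hdH' : dH (push (binChannel α ℓ) Q1) (push (binChannel α ℓ) Q0) ≤ ε := by
        rw [dH_comm]; exact hdH
      have hdHnn : 0 ≤ dH (push (binChannel α ℓ) Q1) (push (binChannel α ℓ) Q0) :=
        Real.sqrt_nonneg _
      rw [← hcdef] at hmg
      have hchain : (∫ x, ℓ x ∂Q1) - ∫ x, ℓ x ∂Q0 ≤ 2 * c * ε := by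
        have h1 := le_trans (le_abs_self _) hmg
        have hstep1 : 2 * (supNorm ℓ * c) * dH (push (binChannel α ℓ) Q1)
            (push (binChannel α ℓ) Q0) ≤ 2 * (supNorm ℓ * c) * ε :=
          mul_le_mul_of_nonneg_left hdH' (by nlinarith)
        have hstep2 : 2 * (supNorm ℓ * c) * ε ≤ 2 * c * ε := by nlinarith
        linarith
      have : 2 * (ε * c) < 2 * y := by linarith
      nlinarith
    · by_contra hcon
      push_neg at hcon
      have h2y := hkey Q0 hQ0 Q1 hQ1 hcon
      have hmg := mean_gap_le_dH hℓmeas hℓb hnz hα Q0 Q1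
      have hdHnn : 0 ≤ dH (push (binChannel α ℓ) Q0) (push (binChannel α ℓ) Q1) :=
        Real.sqrt_nonneg _
      rw [← hcdef] at hmg
      have hchain : (∫ x, ℓ x ∂Q0) - ∫ x, ℓ x ∂Q1 ≤ 2 * c * ε := by
        have h1 := le_trans (le_abs_self _) hmg
        have hstep1 : 2 * (supNorm ℓ * c) * dH (push (binChannel α ℓ) Q0)
            (push (binChannel α ℓ) Q1) ≤ 2 * (supNorm ℓ * c) * ε :=
          mul_le_mul_of_nonneg_left hdH (by nlinarith)
        have hstep2 : 2 * (supNorm ℓ * c) * ε ≤ 2 * c * ε := by nlinarith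
        linarith
      have : 2 * (ε * c) < 2 * y := by linarith
      nlinarith
  · push_neg at hex
    refine hgoal (fun _ => 1) measurable_const (fun x => by norm_num)
      ⟨Classical.arbitrary X, one_ne_zero⟩ ?_
    intro P0 h0 P1 h1 _
    rw [abs_le]
    constructor
    · linarith [hex P1 h1 P0 h0]
    · exact hex P0 h0 P1 h1


end PrivacyPaper
end

section
/- Let (X, 𝒳) and (Z, 𝒵) be measurable spaces, Q a Markov probability kernel from X to Z, and P0, P1 finite measures on (X, 𝒳). Then QP0 and QP1, defined by QP_j(A) = ∫_X Q(A|x) dP_j(x), are finite measures, and ρ(P0, P1) ≤ ρ(QP0, QP1) and d_H(QP0, QP1) ≤ d_H(P0, P1). -/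
open MeasureTheory ProbabilityTheory ENNReal

namespace PrivacyPaper

variable {X Z Ω : Type*} [MeasurableSpace X] [MeasurableSpace Z] [MeasurableSpace Ω]

section Statement13Aux
open scoped NNReal


-- AM-GM in ℝ≥0∞
lemma sqrt_mul_le_half_add (u v : ℝ≥0∞) : (u * v) ^ (1/2 : ℝ) ≤ (u + v) / 2 := by
  rcases eq_or_ne u ∞ with hu | hu
  · have : (u + v) / 2 = ∞ := by
      simp [hu, ENNReal.top_div_of_ne_top]
    rw [this]; exact le_top
  rcases eq_or_ne v ∞ with hv | hv
  · have : (u + v) / 2 = ∞ := by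
      simp [hv, ENNReal.top_div_of_ne_top]
    rw [this]; exact le_top
  lift u to ℝ≥0 using hu
  lift v to ℝ≥0 using hv
  rw [← ENNReal.coe_mul, ← ENNReal.coe_rpow_of_nonneg _ (by norm_num : (0:ℝ) ≤ 1/2),
    show ((2:ℝ≥0∞)) = ((2:ℝ≥0) : ℝ≥0∞) by norm_num, ← ENNReal.coe_add, ← ENNReal.coe_div (by norm_num),
    ENNReal.coe_le_coe, ← NNReal.coe_le_coe, NNReal.coe_rpow, NNReal.coe_mul, NNReal.coe_div,
    NNReal.coe_add]
  rw [← Real.sqrt_eq_rpow]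
  have h1 : Real.sqrt ((u:ℝ) * v) ≤ Real.sqrt ((((u:ℝ) + v)/2)^2) := by
    apply Real.sqrt_le_sqrt; nlinarith [sq_nonneg ((u:ℝ) - v)]
  calc Real.sqrt ((u:ℝ) * v) ≤ Real.sqrt ((((u:ℝ) + v)/2)^2) := h1
    _ = ((u:ℝ) + v)/2 := Real.sqrt_sq (by positivity)
    _ = ((u:ℝ) + v)/(2:ℝ≥0) := by norm_num

lemma sqrt_mul_le_weighted {s : ℝ} (hs : 0 < s) (a b : ℝ≥0∞) :
    (a * b) ^ (1/2 : ℝ) ≤ (ENNReal.ofReal s * a + b / ENNReal.ofReal s) / 2 := by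
  have h0 : ENNReal.ofReal s ≠ 0 := (ENNReal.ofReal_pos.mpr hs).ne'
  have ht : ENNReal.ofReal s ≠ ∞ := ofReal_ne_top
  have : a * b = (ENNReal.ofReal s * a) * (b / ENNReal.ofReal s) := by
    rw [mul_comm (ENNReal.ofReal s) a, mul_assoc, ENNReal.mul_div_cancel h0 ht]
  rw [this]
  exact sqrt_mul_le_half_add _ _


lemma le_sqrt_of_forall_rat {a b x : ℝ} (ha : 0 ≤ a) (hb : 0 ≤ b) (hx : 0 ≤ x)
    (h : ∀ s : ℚ, 0 < s → x ≤ ((s : ℝ) * a + b / s) / 2) : x ≤ Real.sqrt (a * b) := by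
  rcases eq_or_lt_of_le hx with hx0 | hx0
  · rw [← hx0]; positivity
  rcases eq_or_lt_of_le ha with ha0 | ha0
  · exfalso
    obtain ⟨q, hq⟩ := exists_rat_gt (max (b / (2 * x)) 0)
    have hq0 : (0 : ℚ) < q := by exact_mod_cast (le_max_right _ _).trans_lt hq
    have hbq : b / (2 * x) < (q : ℝ) := (le_max_left _ _).trans_lt hq
    have hq0' : (0 : ℝ) < (q : ℝ) := by exact_mod_cast hq0
    have := h q hq0
    rw [← ha0] at this
    have hlt : b / (2 * (q : ℝ)) < x := by
      rw [div_lt_iff₀ (by positivity)] at hbq ⊢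
      nlinarith
    have heq : ((q : ℝ) * 0 + b / q) / 2 = b / (2 * (q : ℝ)) := by ring
    rw [heq] at this
    linarith
  · -- a > 0
    set s₀ : ℝ := x / a with hs₀
    have hs₀0 : 0 < s₀ := by positivity
    have key : x ≤ (s₀ * a + b / s₀) / 2 := by
      refine le_of_forall_pos_le_add fun δ hδ => ?_
      obtain ⟨q, hq1, hq2⟩ := exists_rat_btwn (lt_add_of_pos_right s₀ (by positivity : (0:ℝ) < 2 * δ / a))
      have hq0 : (0 : ℚ) < q := by exact_mod_cast hs₀0.trans hq1
      have h1 := h q hq0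
      have hq0' : (0 : ℝ) < (q : ℝ) := hs₀0.trans hq1
      have hb1 : b / (q : ℝ) ≤ b / s₀ := div_le_div_of_nonneg_left hb hs₀0 hq1.le |>.trans_eq rfl
      calc x ≤ ((q : ℝ) * a + b / q) / 2 := h1
        _ ≤ ((s₀ + 2 * δ / a) * a + b / s₀) / 2 := by
            have : (q : ℝ) * a ≤ (s₀ + 2 * δ / a) * a := by nlinarith
            linarith
        _ = (s₀ * a + b / s₀) / 2 + δ := by
            have e2 : s₀ * a = x := div_mul_cancel₀ x ha0.ne'
            have e : (s₀ + 2 * δ / a) * a = x + 2 * δ := by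
              rw [add_mul, e2, div_mul_cancel₀ _ ha0.ne']
            rw [e, e2]; ring
    have hx2 : x ^ 2 ≤ a * b := by
      have h1 : s₀ * a = x := div_mul_cancel₀ x ha0.ne'
      have h2 : b / s₀ = a * b / x := by rw [hs₀, div_div_eq_mul_div]; ring
      rw [h1, h2] at key
      have h3 : x ≤ a * b / x := by linarith
      rw [le_div_iff₀ hx0] at h3
      nlinarith
    exact Real.le_sqrt_of_sq_le hx2


lemma le_sqrt_mul_of_forall_rat {a b g : ℝ≥0∞} (ha : a ≠ ∞) (hb : b ≠ ∞) (hg : g ≠ ∞)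
    (h : ∀ s : ℚ, 0 < s → g ≤ (ENNReal.ofReal s * a + b / ENNReal.ofReal s) / 2) :
    g ≤ (a * b) ^ (1/2 : ℝ) := by
  have hab : ((a * b) ^ (1/2 : ℝ)).toReal = Real.sqrt (a.toReal * b.toReal) := by
    rw [← ENNReal.toReal_rpow, ENNReal.toReal_mul, Real.sqrt_eq_rpow]
  rw [← ENNReal.ofReal_toReal hg, ← ENNReal.ofReal_toReal
    (show (a * b) ^ (1/2 : ℝ) ≠ ∞ by
      apply ENNReal.rpow_ne_top_of_nonneg (by norm_num)
      exact ENNReal.mul_ne_top ha hb)]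
  rw [hab]
  apply ENNReal.ofReal_le_ofReal
  apply le_sqrt_of_forall_rat ENNReal.toReal_nonneg ENNReal.toReal_nonneg ENNReal.toReal_nonneg
  intro s hs
  have hs' : (0 : ℝ) < (s : ℝ) := by exact_mod_cast hs
  have h1 : ENNReal.ofReal (s : ℝ) * a ≠ ∞ := ENNReal.mul_ne_top ofReal_ne_top ha
  have h2 : b / ENNReal.ofReal (s : ℝ) ≠ ∞ :=
    (ENNReal.div_lt_top hb (ENNReal.ofReal_pos.mpr hs').ne').ne
  have := ENNReal.toReal_mono ((ENNReal.div_lt_top (ENNReal.add_ne_top.mpr ⟨h1, h2⟩) (by norm_num)).ne) (h s hs)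
  rw [ENNReal.toReal_div, ENNReal.toReal_add h1 h2, ENNReal.toReal_mul,
    ENNReal.toReal_div, ENNReal.toReal_ofReal hs'.le] at this
  simpa using this


variable {X Z Ω : Type*} [MeasurableSpace X] [MeasurableSpace Z] [MeasurableSpace Ω]

noncomputable def rhoE (P0 P1 : Measure Ω) : ℝ≥0∞ :=
  ∫⁻ ω, (P0.rnDeriv (P0 + P1) ω * P1.rnDeriv (P0 + P1) ω) ^ (1/2 : ℝ) ∂(P0 + P1)

lemma dens_le_one (P0 P1 : Measure Ω) [IsFiniteMeasure P0] [IsFiniteMeasure P1] :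
    ∀ᵐ ω ∂(P0 + P1),
      (P0.rnDeriv (P0 + P1) ω * P1.rnDeriv (P0 + P1) ω) ^ (1/2 : ℝ) ≤ 1 := by
  have h0 : P0.rnDeriv (P0 + P1) ≤ᵐ[P0 + P1] 1 :=
    Measure.rnDeriv_le_one_of_le (Measure.le_add_right le_rfl)
  have h1 : P1.rnDeriv (P0 + P1) ≤ᵐ[P0 + P1] 1 :=
    Measure.rnDeriv_le_one_of_le (Measure.le_add_left le_rfl)
  filter_upwards [h0, h1] with ω hω0 hω1
  calc (P0.rnDeriv (P0 + P1) ω * P1.rnDeriv (P0 + P1) ω) ^ (1/2 : ℝ)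
      ≤ (1 * 1 : ℝ≥0∞) ^ (1/2 : ℝ) := by
        apply ENNReal.rpow_le_rpow _ (by norm_num)
        exact mul_le_mul' hω0 hω1
    _ = 1 := by simp

lemma bind_univ (Q : Kernel X Z) [IsMarkovKernel Q] (P : Measure X) :
    (P.bind ⇑Q) Set.univ = P Set.univ := by
  rw [Measure.bind_apply MeasurableSet.univ (Kernel.measurable Q).aemeasurable]
  simp

lemma isFiniteMeasure_bind (Q : Kernel X Z) [IsMarkovKernel Q] (P : Measure X)
    [IsFiniteMeasure P] : IsFiniteMeasure (P.bind ⇑Q) :=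
  ⟨by rw [bind_univ]; exact measure_lt_top _ _⟩

lemma lintegral_weighted (ν : Measure Ω) (S : ℝ≥0∞) (hS0 : S ≠ 0) (hS : S ≠ ∞)
    {f0 f1 : Ω → ℝ≥0∞} (h0 : Measurable f0) (h1 : Measurable f1) :
    ∫⁻ z, (S * f0 z + f1 z / S) / 2 ∂ν
      = (S * ∫⁻ z, f0 z ∂ν + (∫⁻ z, f1 z ∂ν) / S) / 2 := by
  simp_rw [div_eq_mul_inv]
  rw [lintegral_mul_const' _ _ (by simp : (2:ℝ≥0∞)⁻¹ ≠ ∞),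
    lintegral_add_left (h0.const_mul S), lintegral_const_mul' _ _ hS,
    lintegral_mul_const' _ _ (ENNReal.inv_ne_top.mpr hS0)]

lemma rhoE_le_bind (Q : Kernel X Z) [IsMarkovKernel Q] (P0 P1 : Measure X)
    [IsFiniteMeasure P0] [IsFiniteMeasure P1] :
    rhoE P0 P1 ≤ rhoE (P0.bind ⇑Q) (P1.bind ⇑Q) := by
  haveI := isFiniteMeasure_bind Q P0
  haveI := isFiniteMeasure_bind Q P1
  set μ : Measure X := P0 + P1 with hμ
  set p0 : X → ℝ≥0∞ := P0.rnDeriv μ with hp0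
  set p1 : X → ℝ≥0∞ := P1.rnDeriv μ with hp1
  have hp0m : Measurable p0 := Measure.measurable_rnDeriv _ _
  have hp1m : Measurable p1 := Measure.measurable_rnDeriv _ _
  set dens : X → ℝ≥0∞ := fun x => (p0 x * p1 x) ^ (1/2 : ℝ) with hdens
  have hdm : Measurable dens := (hp0m.mul hp1m).pow_const _
  set γ : Measure X := μ.withDensity dens with hγ
  have hγle : γ ≤ μ := by
    rw [Measure.le_iff]
    intro A hA
    rw [hγ, withDensity_apply _ hA]
    calc ∫⁻ x in A, dens x ∂μ ≤ ∫⁻ x in A, 1 ∂μ :=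
          lintegral_mono_ae (ae_restrict_of_ae (dens_le_one P0 P1))
      _ = μ A := setLIntegral_one A
  set ν : Measure Z := P0.bind ⇑Q + P1.bind ⇑Q with hν
  have hνbind : ν = μ.bind ⇑Q := by
    refine Measure.ext fun A hA => ?_
    rw [hν, hμ, Measure.add_apply,
      Measure.bind_apply hA (Kernel.measurable Q).aemeasurable,
      Measure.bind_apply hA (Kernel.measurable Q).aemeasurable,
      Measure.bind_apply hA (Kernel.measurable Q).aemeasurable,
      lintegral_add_measure]
  set Qγ : Measure Z := γ.bind ⇑Q with hQγ
  have hQγle : Qγ ≤ ν := by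
    rw [Measure.le_iff]
    intro A hA
    rw [hQγ, hνbind, Measure.bind_apply hA (Kernel.measurable Q).aemeasurable,
      Measure.bind_apply hA (Kernel.measurable Q).aemeasurable]
    exact lintegral_mono' hγle le_rfl
  have hQγac : Qγ ≪ ν := Measure.absolutelyContinuous_of_le hQγle
  haveI : IsFiniteMeasure μ := by rw [hμ]; infer_instance
  haveI : IsFiniteMeasure ν := by rw [hν]; infer_instance
  haveI hQγfin : IsFiniteMeasure Qγ :=
    ⟨lt_of_le_of_lt (hQγle Set.univ) (measure_lt_top ν _)⟩
  set q0 : Z → ℝ≥0∞ := (P0.bind ⇑Q).rnDeriv ν with hq0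
  set q1 : Z → ℝ≥0∞ := (P1.bind ⇑Q).rnDeriv ν with hq1
  set g : Z → ℝ≥0∞ := Qγ.rnDeriv ν with hg
  -- the key integral computation over arbitrary measurable sets
  have hWD0 : μ.withDensity p0 = P0 :=
    Measure.withDensity_rnDeriv_eq _ _ (Measure.absolutelyContinuous_of_le (Measure.le_add_right le_rfl))
  have hWD1 : μ.withDensity p1 = P1 :=
    Measure.withDensity_rnDeriv_eq _ _ (Measure.absolutelyContinuous_of_le (Measure.le_add_left le_rfl))
  have hkey : ∀ (s : ℚ), 0 < s → ∀ A : Set Z, MeasurableSet A →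
      Qγ A ≤ (ENNReal.ofReal (s : ℝ) * (P0.bind ⇑Q) A + (P1.bind ⇑Q) A / ENNReal.ofReal (s : ℝ)) / 2 := by
    intro s hs A hA
    have hs' : (0 : ℝ) < (s : ℝ) := by exact_mod_cast hs
    set S : ℝ≥0∞ := ENNReal.ofReal (s : ℝ) with hS
    have hS0 : S ≠ 0 := (ENNReal.ofReal_pos.mpr hs').ne'
    have hSt : S ≠ ∞ := ofReal_ne_top
    have hQA : Measurable fun x => Q x A := Kernel.measurable_coe Q hA
    have e1 : Qγ A = ∫⁻ x, dens x * Q x A ∂μ := by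
      rw [hQγ, Measure.bind_apply hA (Kernel.measurable Q).aemeasurable, hγ,
        lintegral_withDensity_eq_lintegral_mul μ hdm hQA]
      rfl
    have e2 : ∀ x, dens x * Q x A ≤ (S * (p0 x * Q x A) + (p1 x * Q x A) / S) / 2 := by
      intro x
      have h1 : dens x ≤ (S * p0 x + p1 x / S) / 2 := sqrt_mul_le_weighted hs' _ _
      calc dens x * Q x A ≤ ((S * p0 x + p1 x / S) / 2) * Q x A := mul_le_mul_left h1 _
        _ = (S * (p0 x * Q x A) + (p1 x * Q x A) / S) / 2 := by
            simp only [div_eq_mul_inv]; ring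
    have e3 : ∀ (j : Measure X), IsFiniteMeasure j → j ≪ μ →
        ∫⁻ x, j.rnDeriv μ x * Q x A ∂μ = (j.bind ⇑Q) A := by
      intro j hjf hj
      haveI := hjf
      rw [Measure.bind_apply hA (Kernel.measurable Q).aemeasurable]
      conv_rhs => rw [← Measure.withDensity_rnDeriv_eq j μ hj]
      rw [lintegral_withDensity_eq_lintegral_mul μ (Measure.measurable_rnDeriv _ _) hQA]
      rfl
    calc Qγ A = ∫⁻ x, dens x * Q x A ∂μ := e1
      _ ≤ ∫⁻ x, (S * (p0 x * Q x A) + (p1 x * Q x A) / S) / 2 ∂μ := lintegral_mono e2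
      _ = (S * ∫⁻ x, p0 x * Q x A ∂μ + (∫⁻ x, p1 x * Q x A ∂μ) / S) / 2 :=
          lintegral_weighted μ S hS0 hSt (hp0m.mul hQA) (hp1m.mul hQA)
      _ = (S * (P0.bind ⇑Q) A + (P1.bind ⇑Q) A / S) / 2 := by
          rw [e3 P0 inferInstance (Measure.absolutelyContinuous_of_le (Measure.le_add_right le_rfl)),
            e3 P1 inferInstance (Measure.absolutelyContinuous_of_le (Measure.le_add_left le_rfl))]
  -- a.e. pointwise bound on g
  have hae : ∀ (s : ℚ), ∀ᵐ z ∂ν, 0 < s →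
      g z ≤ (ENNReal.ofReal (s : ℝ) * q0 z + q1 z / ENNReal.ofReal (s : ℝ)) / 2 := by
    intro s
    by_cases hs : 0 < s
    · have hs' : (0 : ℝ) < (s : ℝ) := by exact_mod_cast hs
      set S : ℝ≥0∞ := ENNReal.ofReal (s : ℝ) with hS
      have hS0 : S ≠ 0 := (ENNReal.ofReal_pos.mpr hs').ne'
      have hSt : S ≠ ∞ := ofReal_ne_top
      have hq0m : Measurable q0 := Measure.measurable_rnDeriv _ _
      have hq1m : Measurable q1 := Measure.measurable_rnDeriv _ _
      have h := ae_le_of_forall_setLIntegral_le_of_sigmaFinite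
        (μ := ν) (f := g) (g := fun z => (S * q0 z + q1 z / S) / 2)
        (Measure.measurable_rnDeriv _ _) ?_
      · filter_upwards [h] with z hz _
        exact hz
      · intro A hA _
        have l1 : ∫⁻ z in A, g z ∂ν = Qγ A := Measure.setLIntegral_rnDeriv hQγac A
        have l2 : ∫⁻ z in A, (S * q0 z + q1 z / S) / 2 ∂ν
            = (S * (P0.bind ⇑Q) A + (P1.bind ⇑Q) A / S) / 2 := by
          have := lintegral_weighted (ν.restrict A) S hS0 hSt hq0m hq1m
          rw [this, Measure.setLIntegral_rnDeriv
              (Measure.absolutelyContinuous_of_le (Measure.le_add_right le_rfl)) A,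
            Measure.setLIntegral_rnDeriv
              (Measure.absolutelyContinuous_of_le (Measure.le_add_left le_rfl)) A]
        rw [l1, l2]
        exact hkey s hs A hA
    · exact ae_of_all _ fun z h => absurd h hs
  have haeall : ∀ᵐ z ∂ν, g z ≤ (q0 z * q1 z) ^ (1/2 : ℝ) := by
    have h1 : ∀ᵐ z ∂ν, ∀ s : ℚ, 0 < s →
        g z ≤ (ENNReal.ofReal (s : ℝ) * q0 z + q1 z / ENNReal.ofReal (s : ℝ)) / 2 :=
      ae_all_iff.mpr hae
    have h2 := Measure.rnDeriv_lt_top Qγ ν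
    have h3 := Measure.rnDeriv_lt_top (P0.bind ⇑Q) ν
    have h4 := Measure.rnDeriv_lt_top (P1.bind ⇑Q) ν
    filter_upwards [h1, h2, h3, h4] with z hz hgz h0z h1z
    exact le_sqrt_mul_of_forall_rat h0z.ne h1z.ne hgz.ne hz
  -- conclude
  have m1 : rhoE P0 P1 = γ Set.univ := by
    rw [hγ, withDensity_apply _ MeasurableSet.univ, setLIntegral_univ]
    rfl
  have m2 : γ Set.univ = Qγ Set.univ := (bind_univ Q γ).symm
  have m3 : Qγ Set.univ = ∫⁻ z, g z ∂ν := (Measure.lintegral_rnDeriv hQγac).symm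
  rw [m1, m2, m3]
  calc ∫⁻ z, g z ∂ν ≤ ∫⁻ z, (q0 z * q1 z) ^ (1/2 : ℝ) ∂ν := lintegral_mono_ae haeall
    _ = rhoE (P0.bind ⇑Q) (P1.bind ⇑Q) := rfl




lemma rhoE_ne_top (P0 P1 : Measure Ω) [IsFiniteMeasure P0] [IsFiniteMeasure P1] :
    rhoE P0 P1 ≠ ∞ := by
  have h : rhoE P0 P1 ≤ (P0 + P1) Set.univ := by
    rw [rhoE]
    calc ∫⁻ ω, (P0.rnDeriv (P0 + P1) ω * P1.rnDeriv (P0 + P1) ω) ^ (1/2 : ℝ) ∂(P0 + P1)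
        ≤ ∫⁻ _, 1 ∂(P0 + P1) := lintegral_mono_ae (dens_le_one P0 P1)
      _ = (P0 + P1) Set.univ := lintegral_one
  exact (lt_of_le_of_lt h (measure_lt_top _ _)).ne

lemma hellingerAffinity_eq_toReal (P0 P1 : Measure Ω) [IsFiniteMeasure P0]
    [IsFiniteMeasure P1] : hellingerAffinity P0 P1 = (rhoE P0 P1).toReal := by
  have h : ∀ ω, Real.sqrt ((P0.rnDeriv (P0 + P1) ω).toReal * (P1.rnDeriv (P0 + P1) ω).toReal)
      = ((P0.rnDeriv (P0 + P1) ω * P1.rnDeriv (P0 + P1) ω) ^ (1/2 : ℝ)).toReal := by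
    intro ω
    rw [← ENNReal.toReal_rpow, ENNReal.toReal_mul, Real.sqrt_eq_rpow]
  rw [hellingerAffinity, rhoE]
  simp_rw [h]
  rw [integral_toReal]
  · exact (((Measure.measurable_rnDeriv _ _).mul
      (Measure.measurable_rnDeriv _ _)).pow_const _).aemeasurable
  · filter_upwards [dens_le_one P0 P1] with ω hω
    exact lt_of_le_of_lt hω ENNReal.one_lt_top

lemma sqrt_toReal_rnDeriv_le_one {P μ : Measure Ω} [SigmaFinite μ] (h : P ≤ μ) :
    ∀ᵐ ω ∂μ, Real.sqrt ((P.rnDeriv μ ω).toReal) ≤ 1 := by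
  filter_upwards [Measure.rnDeriv_le_one_of_le h] with ω hω
  have h1 : (P.rnDeriv μ ω).toReal ≤ 1 := by
    rcases eq_or_ne (P.rnDeriv μ ω) ∞ with h' | h'
    · simp [h']
    · exact ENNReal.toReal_le_of_le_ofReal one_pos.le (by simpa using hω)
  calc Real.sqrt ((P.rnDeriv μ ω).toReal) ≤ Real.sqrt 1 := Real.sqrt_le_sqrt h1
    _ = 1 := Real.sqrt_one

lemma dH_eq (P0 P1 : Measure Ω) [IsFiniteMeasure P0] [IsFiniteMeasure P1] :
    dH P0 P1 = Real.sqrt ((P0 Set.univ).toReal + (P1 Set.univ).toReal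
      - 2 * hellingerAffinity P0 P1) := by
  set μ : Measure Ω := P0 + P1 with hμ
  set f0 : Ω → ℝ := fun ω => (P0.rnDeriv μ ω).toReal with hf0
  set f1 : Ω → ℝ := fun ω => (P1.rnDeriv μ ω).toReal with hf1
  have hm0 : Measurable f0 := (Measure.measurable_rnDeriv _ _).ennreal_toReal
  have hm1 : Measurable f1 := (Measure.measurable_rnDeriv _ _).ennreal_toReal
  have i0 : Integrable f0 μ := Measure.integrable_toReal_rnDeriv
  have i1 : Integrable f1 μ := Measure.integrable_toReal_rnDeriv
  have isq : Integrable (fun ω => Real.sqrt (f0 ω * f1 ω)) μ := by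
    refine Integrable.mono' (integrable_const 1)
      ((hm0.mul hm1).sqrt.aestronglyMeasurable) ?_
    filter_upwards [sqrt_toReal_rnDeriv_le_one (Measure.le_add_right le_rfl : P0 ≤ P0 + P1),
      sqrt_toReal_rnDeriv_le_one (Measure.le_add_left le_rfl : P1 ≤ P0 + P1)] with ω h0 h1
    rw [Real.norm_eq_abs, abs_of_nonneg (Real.sqrt_nonneg _), Real.sqrt_mul ENNReal.toReal_nonneg]
    calc Real.sqrt (f0 ω) * Real.sqrt (f1 ω) ≤ 1 * 1 :=
          mul_le_mul h0 h1 (Real.sqrt_nonneg _) one_pos.le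
      _ = 1 := by norm_num
  have hpt : ∀ ω, (Real.sqrt (f0 ω) - Real.sqrt (f1 ω)) ^ 2
      = f0 ω + f1 ω - 2 * Real.sqrt (f0 ω * f1 ω) := by
    intro ω
    rw [sub_sq, Real.sq_sqrt ENNReal.toReal_nonneg, Real.sq_sqrt ENNReal.toReal_nonneg,
      Real.sqrt_mul ENNReal.toReal_nonneg]
    ring
  have hint : ∫ ω, (Real.sqrt (f0 ω) - Real.sqrt (f1 ω)) ^ 2 ∂μ
      = (P0 Set.univ).toReal + (P1 Set.univ).toReal - 2 * hellingerAffinity P0 P1 := by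
    simp_rw [hpt]
    have hsub := integral_sub (μ := μ) (f := fun ω => f0 ω + f1 ω)
      (g := fun ω => 2 * Real.sqrt (f0 ω * f1 ω)) (i0.add i1) (isq.const_mul 2)
    rw [hsub, integral_add i0 i1, MeasureTheory.integral_const_mul 2 (fun ω => Real.sqrt (f0 ω * f1 ω))]
    rw [Measure.integral_toReal_rnDeriv (Measure.absolutelyContinuous_of_le
        (Measure.le_add_right le_rfl : P0 ≤ P0 + P1)),
      Measure.integral_toReal_rnDeriv (Measure.absolutelyContinuous_of_le
        (Measure.le_add_left le_rfl : P1 ≤ P0 + P1))]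
    rfl
  rw [dH, hint]

lemma hellingerAffinity_le_bind (Q : Kernel X Z) [IsMarkovKernel Q] (P0 P1 : Measure X)
    [IsFiniteMeasure P0] [IsFiniteMeasure P1] :
    hellingerAffinity P0 P1 ≤ hellingerAffinity (P0.bind ⇑Q) (P1.bind ⇑Q) := by
  haveI := isFiniteMeasure_bind Q P0
  haveI := isFiniteMeasure_bind Q P1
  rw [hellingerAffinity_eq_toReal, hellingerAffinity_eq_toReal]
  exact ENNReal.toReal_mono (rhoE_ne_top _ _) (rhoE_le_bind Q P0 P1)

lemma dH_bind_le (Q : Kernel X Z) [IsMarkovKernel Q] (P0 P1 : Measure X)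
    [IsFiniteMeasure P0] [IsFiniteMeasure P1] :
    dH (P0.bind ⇑Q) (P1.bind ⇑Q) ≤ dH P0 P1 := by
  haveI := isFiniteMeasure_bind Q P0
  haveI := isFiniteMeasure_bind Q P1
  rw [dH_eq, dH_eq, bind_univ, bind_univ]
  apply Real.sqrt_le_sqrt
  have := hellingerAffinity_le_bind Q P0 P1
  linarith


end Statement13Aux

/-- Lemma: data-processing for the Hellinger affinity and distance.
For a Markov probability kernel `Q` from `X` to `Z` and finite measures `P0`, `P1` on `X`,
the measures `Q P0` and `Q P1` are finite, and
`ρ(P0, P1) ≤ ρ(Q P0, Q P1)` and `d_H(Q P0, Q P1) ≤ d_H(P0, P1)`. -/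
theorem statement13 {X Z : Type*} [MeasurableSpace X] [MeasurableSpace Z]
    (Q : Kernel X Z) (hQ : IsMarkovKernel Q)
    (P0 P1 : Measure X) (h0 : IsFiniteMeasure P0) (h1 : IsFiniteMeasure P1) :
    IsFiniteMeasure (push (fun x => Q x) P0) ∧ IsFiniteMeasure (push (fun x => Q x) P1) ∧
      hellingerAffinity P0 P1
        ≤ hellingerAffinity (push (fun x => Q x) P0) (push (fun x => Q x) P1) ∧
      dH (push (fun x => Q x) P0) (push (fun x => Q x) P1) ≤ dH P0 P1 := by
  haveI := h0
  haveI := h1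
  haveI hf0 : IsFiniteMeasure (P0.bind ⇑Q) := isFiniteMeasure_bind Q P0
  haveI hf1 : IsFiniteMeasure (P1.bind ⇑Q) := isFiniteMeasure_bind Q P1
  refine ⟨hf0, hf1, ?_, ?_⟩
  · exact hellingerAffinity_le_bind Q P0 P1
  · exact dH_bind_le Q P0 P1

end PrivacyPaper
end
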